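/- arXiv:1502.03849 — 5 statements merged into one kernel-verified Lean document; each statement's English description precedes it below -/
import Mathlib

section
/- There is a universal constant C > 0 such that for every number of agents n, every profile u of unit-sum valuations, and every pure Nash equilibrium s of the Random Priority mechanism at u, the optimal social welfare satisfies SW_OPT(u) ≤ C·√n·SW_RP(u,s); i.e., the pure Price of Anarchy of Random Priority is O(√n). -/
/-- A unit-sum valuation over `n` items. -/
def UnitSum {n : ℕ} (v : Fin n → ℝ) : Prop :=
  (∀ j, 0 ≤ v j) ∧ ∑ j, v j = 1

/-- A unit-range valuation over `n` items. -/
def UnitRange {n : ℕ} (v : Fin n → ℝ) : Prop :=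
  (∀ j, 0 ≤ v j ∧ v j ≤ 1) ∧ (∃ j, v j = 1) ∧ (∃ j, v j = 0)

/-- The optimal social welfare: the maximum over matchings (permutations of the
items) of the total utility. -/
noncomputable def SWopt {n : ℕ} (u : Fin n → Fin n → ℝ) : ℝ :=
  Finset.univ.sup' ⟨Equiv.refl (Fin n), Finset.mem_univ _⟩
    (fun μ : Equiv.Perm (Fin n) => ∑ i, u i (μ i))
open Classical in
/-- The list of items assigned by serial dictatorship in the first `r` positions:
given reported orderings `s` (bijections from ranks to items, rank `0` most
preferred) and an ordering `π` of the agents (position `r` is served by agent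
`π r`), the agent at each position receives her most preferred item among those
not yet assigned. -/
noncomputable def sdList {n : ℕ} (s : Fin n → (Fin n ≃ Fin n)) (π : Equiv.Perm (Fin n)) :
    ℕ → List (Fin n)
  | 0 => []
  | (r + 1) =>
      let prev := sdList s π r
      if h : r < n then
        let i := π ⟨r, h⟩
        let R : Finset (Fin n) := Finset.univ.filter (fun t => s i t ∉ prev)
        let itm : Fin n :=
          if hR : R.Nonempty then s i (R.min' hR)
          else ⟨0, Nat.lt_of_le_of_lt (Nat.zero_le r) h⟩
        prev ++ [itm]
      else prev

/-- The item assigned to agent `i` by serial dictatorship with agent ordering `π`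
and reported orderings `s`. -/
noncomputable def sdAssign {n : ℕ} (s : Fin n → (Fin n ≃ Fin n)) (π : Equiv.Perm (Fin n))
    (i : Fin n) : Fin n :=
  (sdList s π n).getD (π.symm i : ℕ) ⟨0, i.pos⟩

open Classical in
/-- `rpProb s i j` is the probability that agent `i` receives item `j` under the
Random Priority mechanism at report profile `s`: an ordering of the agents is
drawn uniformly at random and serial dictatorship is run with respect to it. -/
noncomputable def rpProb {n : ℕ} (s : Fin n → (Fin n ≃ Fin n)) (i j : Fin n) : ℝ :=
  (∑ π : Equiv.Perm (Fin n), if sdAssign s π i = j then (1 : ℝ) else 0) / (n.factorial : ℝ)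

/-- The expected social welfare of Random Priority at report profile `s` under
true valuation profile `u`. -/
noncomputable def rpSW {n : ℕ} (u : Fin n → Fin n → ℝ) (s : Fin n → (Fin n ≃ Fin n)) : ℝ :=
  ∑ i, ∑ j, rpProb s i j * u i j

/-- `s` is a pure Nash equilibrium of Random Priority at true valuation profile
`u`: no agent can strictly increase her expected utility by unilaterally
reporting a different ordering. -/
def RPNash {n : ℕ} (u : Fin n → Fin n → ℝ) (s : Fin n → (Fin n ≃ Fin n)) : Prop :=
  ∀ (i : Fin n) (s' : Fin n ≃ Fin n),
    ∑ j, rpProb (Function.update s i s') i j * u i j ≤ ∑ j, rpProb s i j * u i j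


/-! At an equilibrium no agent gains by reporting truthfully. An agent served at position `p`
then receives one of her `p + 1` favourite items, so averaging over positions she gets at least
`1/n` of her unit total value, and `SW_RP ≥ 1`. Nor does agent `i` gain by ranking her optimal
item `μ i` first, which secures it whenever it is still free at her turn. Moving her to the end of
the ordering delays every other assignment by at most one step, so this happens with probability
at least `t/n` times the probability that `μ i` survives the first `t` steps of serial
dictatorship. Those steps take only `t` items, so summing over agents gives
`n · SW_RP ≥ t · (SW_OPT - t)`. With `t ≈ SW_OPT / 2` this yields `SW_OPT ≤ 4 √n · SW_RP`
whenever `SW_OPT > 4 √n`, and `SW_RP ≥ 1` covers the remaining case. -/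

open Finset Equiv

section SerialDictatorship

variable {n : ℕ}

noncomputable def bestFree (o : Fin n ≃ Fin n) (taken : List (Fin n)) (h0 : 0 < n) : Fin n :=
  if hR : (univ.filter fun r => o r ∉ taken).Nonempty then
    o ((univ.filter fun r => o r ∉ taken).min' hR)
  else ⟨0, h0⟩

section BestFree

variable (o : Fin n ≃ Fin n) {taken taken' : List (Fin n)} (h0 : 0 < n) {x : Fin n}

lemma bestFree_spec (hx : x ∉ taken) :
    bestFree o taken h0 ∉ taken ∧ o.symm (bestFree o taken h0) ≤ o.symm x := by
  have hR : (univ.filter fun r => o r ∉ taken).Nonempty := ⟨o.symm x, by simpa using hx⟩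
  have hmin := (univ.filter fun r => o r ∉ taken).min'_mem hR
  have hle := (univ.filter fun r => o r ∉ taken).min'_le (o.symm x) (by simpa using hx)
  simp only [bestFree, dif_pos hR, Equiv.symm_apply_apply]
  exact ⟨(mem_filter.1 hmin).2, hle⟩

lemma bestFree_notMem (hx : x ∉ taken) : bestFree o taken h0 ∉ taken :=
  (bestFree_spec o h0 hx).1

lemma symm_bestFree_le (hx : x ∉ taken) : o.symm (bestFree o taken h0) ≤ o.symm x :=
  (bestFree_spec o h0 hx).2

lemma bestFree_eq_top (htop : o ⟨0, h0⟩ ∉ taken) : bestFree o taken h0 = o ⟨0, h0⟩ := by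
  have h := symm_bestFree_le o h0 htop
  rw [Equiv.symm_apply_apply] at h
  exact o.symm_apply_eq.1 (le_antisymm h (Fin.le_iff_val_le_val.2 (Nat.zero_le _)))

lemma bestFree_mem_or_eq (hsub : taken ⊆ taken') :
    bestFree o taken h0 ∈ taken' ∨ bestFree o taken h0 = bestFree o taken' h0 := by
  refine or_iff_not_imp_left.2 fun hfree => o.symm.injective (le_antisymm ?_ ?_)
  · exact symm_bestFree_le o h0 fun h => bestFree_notMem o h0 hfree (hsub h)
  · exact symm_bestFree_le o h0 hfree

end BestFree

variable (s : Fin n → (Fin n ≃ Fin n)) (π : Perm (Fin n))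

lemma sdList_succ {r : ℕ} (h : r < n) :
    sdList s π (r + 1) =
      sdList s π r ++ [bestFree (s (π ⟨r, h⟩)) (sdList s π r) (by omega)] := by
  rw [sdList]
  simp only [bestFree, dif_pos h]

lemma sdList_succ_of_le {r : ℕ} (h : n ≤ r) : sdList s π (r + 1) = sdList s π r := by
  rw [sdList]
  simp only [dif_neg (not_lt.2 h)]

lemma length_sdList (r : ℕ) : (sdList s π r).length = min r n := by
  induction r with
  | zero => simp [sdList]
  | succ r ih =>
    rcases lt_or_ge r n with h | h
    · rw [sdList_succ s π h, List.length_append, ih, List.length_singleton]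
      omega
    · rw [sdList_succ_of_le s π h, ih]
      omega

lemma sdList_prefix {r r' : ℕ} (h : r ≤ r') : sdList s π r <+: sdList s π r' := by
  induction r', h using Nat.le_induction with
  | base => exact List.prefix_refl _
  | succ r' _ ih =>
    rcases lt_or_ge r' n with h | h
    · rw [sdList_succ s π h]
      exact ih.trans (List.prefix_append _ _)
    · rwa [sdList_succ_of_le s π h]

lemma sdList_subset {r r' : ℕ} (h : r ≤ r') : sdList s π r ⊆ sdList s π r' :=
  (sdList_prefix s π h).subset

lemma sdList_congr {s' : Fin n → (Fin n ≃ Fin n)} {π' : Perm (Fin n)} {r : ℕ}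
    (h : ∀ (k : ℕ) (hk : k < n), k < r →
      π ⟨k, hk⟩ = π' ⟨k, hk⟩ ∧ s (π ⟨k, hk⟩) = s' (π ⟨k, hk⟩)) :
    sdList s π r = sdList s' π' r := by
  induction r with
  | zero => simp [sdList]
  | succ r ih =>
    have ih' := ih fun k hk hkr => h k hk (by omega)
    rcases lt_or_ge r n with hr | hr
    · obtain ⟨hπ, hs⟩ := h r hr (by omega)
      rw [sdList_succ s π hr, sdList_succ s' π' hr, ← hπ, hs, ih']
    · rw [sdList_succ_of_le s π hr, sdList_succ_of_le s' π' hr, ih']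

lemma sdAssign_eq_bestFree (i : Fin n) :
    sdAssign s π i = bestFree (s i) (sdList s π (π.symm i)) i.pos := by
  set p := π.symm i
  obtain ⟨rest, hrest⟩ := sdList_prefix s π (show p.val + 1 ≤ n by omega)
  have hlen := length_sdList s π p
  rw [sdAssign, ← hrest, sdList_succ s π p.isLt, List.append_assoc,
    List.getD_append_right _ _ _ _ (by omega)]
  simp [hlen, p]

lemma sdList_update_self (i : Fin n) (e : Fin n ≃ Fin n) :
    sdList (Function.update s i e) π (π.symm i) = sdList s π (π.symm i) := by
  refine sdList_congr _ _ fun k hk hki => ⟨rfl, Function.update_of_ne ?_ _ _⟩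
  rintro rfl
  simp at hki

lemma symm_sdAssign_le (i : Fin n) : (s i).symm (sdAssign s π i) ≤ π.symm i := by
  set p := π.symm i
  have hcard : #(sdList s π p).toFinset < #((Iic p).map (s i).toEmbedding) := by
    have := List.toFinset_card_le (sdList s π p)
    rw [length_sdList, min_eq_left p.isLt.le] at this
    simp only [card_map, Fin.card_Iic]
    omega
  obtain ⟨x, hx, hfree⟩ := exists_mem_notMem_of_card_lt_card hcard
  obtain ⟨k, hk, rfl⟩ := mem_map.1 hx
  rw [sdAssign_eq_bestFree]
  calc (s i).symm (bestFree (s i) (sdList s π p) i.pos)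
      ≤ (s i).symm (s i k) := symm_bestFree_le _ _ (by simpa using hfree)
    _ ≤ p := by simpa using hk

lemma sdAssign_update_swap_of_notMem {i j : Fin n} (hj : j ∉ sdList s π (π.symm i)) :
    sdAssign (Function.update s i (Equiv.swap ⟨0, i.pos⟩ j)) π i = j := by
  rw [sdAssign_eq_bestFree, sdList_update_self, Function.update_self, bestFree_eq_top]
  · exact Equiv.swap_apply_left _ _
  · rwa [Equiv.swap_apply_left]

/-- `Ψ` is `π` with the agent served last moved forward to position `p`: this delays every
assignment by at most one step. -/
lemma sdList_subset_sdList_succ_of_insert {π Ψ : Perm (Fin n)} {p : ℕ}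
    (hlt : ∀ (k : ℕ) (hk : k < n), k < p → Ψ ⟨k, hk⟩ = π ⟨k, hk⟩)
    (hge : ∀ (k : ℕ) (hk : k + 1 < n), p ≤ k → Ψ ⟨k + 1, hk⟩ = π ⟨k, by omega⟩) :
    ∀ k < n, sdList s π k ⊆ sdList s Ψ (k + 1) := by
  intro k
  induction k with
  | zero => simp [sdList]
  | succ k ih =>
    intro hk
    rcases lt_or_ge k p with hkp | hkp
    · have hagree : sdList s π (k + 1) = sdList s Ψ (k + 1) :=
        sdList_congr _ _ fun m hm hmk => by rw [hlt m hm (by omega)]; exact ⟨rfl, rfl⟩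
      exact hagree ▸ sdList_subset s Ψ (by omega)
    · have hsub := ih (by omega)
      rw [sdList_succ s π (by omega), sdList_succ s Ψ hk, hge k hk hkp]
      intro x hx
      rcases List.mem_append.1 hx with hx | hx
      · exact List.mem_append_left _ (hsub hx)
      · rw [List.mem_singleton.1 hx]
        rcases bestFree_mem_or_eq (s (π ⟨k, by omega⟩)) (by omega) hsub with h | h
        · exact List.mem_append_left _ h
        · exact List.mem_append_right _ (List.mem_singleton.2 h)

end SerialDictatorship

section Counting

variable {n : ℕ}

lemma nsmul_sum_perm_symm_apply {M : Type*} [AddCommMonoid M] (f : Fin n → M) (i : Fin n) :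
    n • ∑ π : Perm (Fin n), f (π.symm i) = n.factorial • ∑ p, f p := by
  have hswap (k : Fin n) :
      ∑ π : Perm (Fin n), f (π.symm k) = ∑ π : Perm (Fin n), f (π.symm i) :=
    Fintype.sum_equiv (Equiv.mulLeft (Equiv.swap i k)) _ _ fun π => by simp [Perm.mul_def]
  calc n • ∑ π : Perm (Fin n), f (π.symm i)
      = ∑ k, ∑ π : Perm (Fin n), f (π.symm k) := by simp [hswap]
    _ = ∑ π : Perm (Fin n), ∑ p, f p := by
        rw [sum_comm]
        exact sum_congr rfl fun π _ => Equiv.sum_comp π.symm f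
    _ = n.factorial • ∑ p, f p := by simp [Fintype.card_perm]

lemma card_filter_le_of_mul_right {G : Type*} [Group G] [Fintype G] {P Q : G → Prop}
    [DecidablePred P] [DecidablePred Q] (c : G) (h : ∀ π, P π → Q (π * c)) :
    #{π | P π} ≤ #{π | Q π} :=
  card_le_card_of_injOn (· * c) (fun π hπ => by simpa using h π (by simpa using hπ))
    fun _ _ _ _ => mul_right_cancel

/-- The inverse of the cycle `(p p+1 … n-1)`: precomposing an agent ordering with it moves the
agent served last to position `p`. -/
def toLast (p : Fin n) : Perm (Fin n) :=
  (Fin.cycleIcc p ⟨n - 1, Nat.sub_one_lt_of_lt p.isLt⟩)⁻¹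

lemma toLast_apply_of_lt {p k : Fin n} (h : k < p) : toLast p k = k := by
  rw [toLast, Perm.inv_eq_iff_eq, Fin.cycleIcc_of_lt h]

lemma toLast_self (p : Fin n) : toLast p p = ⟨n - 1, Nat.sub_one_lt_of_lt p.isLt⟩ := by
  have := p.neZero
  rw [toLast, Perm.inv_eq_iff_eq,
    Fin.cycleIcc_of_last (Fin.le_iff_val_le_val.2 (by simp; omega))]

lemma toLast_succ {p : Fin n} {k : ℕ} (hk : k + 1 < n) (hpk : p ≤ k) :
    toLast p ⟨k + 1, hk⟩ = ⟨k, by omega⟩ := by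
  have := p.neZero
  rw [toLast, Perm.inv_eq_iff_eq, Fin.cycleIcc_of_ge_of_lt (Fin.le_iff_val_le_val.2 hpk)
    (Fin.lt_def.2 (by simp; omega))]
  ext
  rw [Fin.val_add_one_of_lt' (by simp; omega)]

end Counting

section Availability

variable {n : ℕ} (s : Fin n → (Fin n ≃ Fin n)) (i j : Fin n) {t : ℕ}

lemma card_last_le_card_at {r : ℕ} (hrt : r < t) (htn : t ≤ n) :
    #{π : Perm (Fin n) | j ∉ sdList s π (t - 1) ∧ (π.symm i : ℕ) = n - 1}
      ≤ #{π : Perm (Fin n) | j ∉ sdList s π r ∧ (π.symm i : ℕ) = r} := by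
  set p : Fin n := ⟨r, by omega⟩
  refine card_filter_le_of_mul_right (toLast p) fun π ⟨hj, hlast⟩ => ⟨?_, ?_⟩
  · have hprefix : sdList s (π * toLast p) r = sdList s π r := sdList_congr _ _ fun k hk hkr =>
      ⟨by rw [Perm.mul_apply, toLast_apply_of_lt (k := ⟨k, hk⟩) hkr], rfl⟩
    rw [hprefix]
    exact fun hmem => hj (sdList_subset s π (by omega) hmem)
  · have hπ : π.symm i = toLast p p := Fin.ext (by rw [toLast_self]; exact hlast)
    simp [Perm.mul_def, hπ, p]

lemma card_at_le_card_last (ht : 1 ≤ t) (htn : t ≤ n) (p : Fin n) :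
    #{π : Perm (Fin n) | j ∉ sdList s π t ∧ π.symm i = p}
      ≤ #{π : Perm (Fin n) | j ∉ sdList s π (t - 1) ∧ (π.symm i : ℕ) = n - 1} := by
  refine card_filter_le_of_mul_right (toLast p)⁻¹
    fun σ ⟨hj, hp⟩ => ⟨fun hmem => hj ?_, ?_⟩
  · have hdelay := sdList_subset_sdList_succ_of_insert s (Ψ := σ) (p := p)
      (fun k hk hkp => by
        rw [Perm.mul_apply, Perm.inv_eq_iff_eq.2 (toLast_apply_of_lt (k := ⟨k, hk⟩) hkp).symm])
      (fun k hk hpk => by rw [Perm.mul_apply, Perm.inv_eq_iff_eq.2 (toLast_succ hk hpk).symm])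
      (t - 1) (by omega)
    rw [Nat.sub_add_cancel ht] at hdelay
    exact hdelay hmem
  · simp [Perm.mul_def, Perm.inv_def, hp, toLast_self]

lemma mul_card_notMem_sdList_le (ht : 1 ≤ t) (htn : t ≤ n) :
    t * #{π : Perm (Fin n) | j ∉ sdList s π t}
      ≤ n * #{π : Perm (Fin n) | j ∉ sdList s π (π.symm i)} := by
  -- Split both sides by the position of `i`: each of the `n` classes on the left has at most `M`
  -- elements and each of the first `t` classes on the right at least `M`, where `M` counts the
  -- orderings serving `i` last.
  set M := #{π : Perm (Fin n) | j ∉ sdList s π (t - 1) ∧ (π.symm i : ℕ) = n - 1}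
  have hsplit : #{π : Perm (Fin n) | j ∉ sdList s π t} ≤ n * M := by
    rw [← filter_true_of_mem (s := filter _ univ) fun π _ => mem_univ (π.symm i),
      ← sum_card_fiberwise_eq_card_filter]
    calc ∑ p, #{π ∈ {π : Perm (Fin n) | j ∉ sdList s π t} | π.symm i = p}
        ≤ ∑ _p : Fin n, M := sum_le_sum fun p _ => by
          rw [filter_filter]; exact card_at_le_card_last s i j ht htn p
      _ = n * M := by simp
  have hmove : t * M ≤ #{π : Perm (Fin n) | j ∉ sdList s π (π.symm i)} := by
    calc t * M = ∑ _r ∈ range t, M := by simp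
      _ ≤ ∑ r ∈ range t, #{π ∈ {π : Perm (Fin n) | j ∉ sdList s π (π.symm i)} |
            (π.symm i : ℕ) = r} := sum_le_sum fun r hr => by
          rw [filter_filter]
          refine (card_last_le_card_at s i j (mem_range.1 hr) htn).trans_eq (congr_arg card ?_)
          exact filter_congr fun π _ =>
            ⟨fun ⟨h, hr⟩ => ⟨hr ▸ h, hr⟩, fun ⟨h, hr⟩ => ⟨hr ▸ h, hr⟩⟩
      _ ≤ _ := (sum_card_fiberwise_eq_card_filter _ _ _).trans_le (card_filter_le _ _)
  calc t * #{π : Perm (Fin n) | j ∉ sdList s π t}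
      ≤ t * (n * M) := Nat.mul_le_mul_left t hsplit
    _ = n * (t * M) := by ring
    _ ≤ _ := Nat.mul_le_mul_left n hmove

end Availability

section Welfare

variable {n : ℕ} {u : Fin n → Fin n → ℝ} {s : Fin n → (Fin n ≃ Fin n)}

lemma UnitSum.le_one {v : Fin n → ℝ} (hv : UnitSum v) (j : Fin n) : v j ≤ 1 :=
  hv.2 ▸ single_le_sum (fun k _ => hv.1 k) (mem_univ j)

lemma exists_antitone_comp_equiv {α : Type*} [LinearOrder α] (v : Fin n → α) :
    ∃ e : Fin n ≃ Fin n, Antitone (v ∘ e) :=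
  ⟨Fin.revPerm.trans (Tuple.sort v), (Tuple.monotone_sort v).comp_antitone Fin.rev_anti⟩

lemma sum_rpProb_mul (s : Fin n → (Fin n ≃ Fin n)) (i : Fin n) (v : Fin n → ℝ) :
    ∑ j, rpProb s i j * v j =
      (∑ π : Perm (Fin n), v (sdAssign s π i)) / n.factorial := by
  simp only [rpProb, div_mul_eq_mul_div, ← sum_div, sum_mul, ite_mul, one_mul, zero_mul]
  rw [sum_comm]
  simp

lemma RPNash.sum_sdAssign_update_le (hN : RPNash u s) (i : Fin n) (e : Fin n ≃ Fin n) :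
    ∑ π : Perm (Fin n), u i (sdAssign (Function.update s i e) π i)
      ≤ n.factorial * ∑ j, rpProb s i j * u i j := by
  have h := hN i e
  rw [sum_rpProb_mul, div_le_iff₀ (by positivity)] at h
  linarith

lemma RPNash.inv_le_sum_rpProb_mul (hN : RPNash u s) {i : Fin n} (hu : UnitSum (u i)) :
    (n : ℝ)⁻¹ ≤ ∑ j, rpProb s i j * u i j := by
  obtain ⟨e, he⟩ := exists_antitone_comp_equiv (u i)
  have hrank (π : Perm (Fin n)) :
      u i (e (π.symm i)) ≤ u i (sdAssign (Function.update s i e) π i) := by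
    simpa using he (symm_sdAssign_le (Function.update s i e) π i)
  have havg : (n : ℝ) * ∑ π : Perm (Fin n), u i (e (π.symm i)) = n.factorial := by
    have h := nsmul_sum_perm_symm_apply (fun p => u i (e p)) i
    rw [Equiv.sum_comp e (u i), hu.2, nsmul_eq_mul, nsmul_one] at h
    exact h
  have hdev := (sum_le_sum fun π _ => hrank π).trans (hN.sum_sdAssign_update_le i e)
  have hfact : (0 : ℝ) < n.factorial := by positivity
  have hn : (0 : ℝ) < n := by exact_mod_cast i.pos
  rw [inv_le_iff_one_le_mul₀ hn]
  nlinarith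

lemma RPNash.one_le_rpSW (hN : RPNash u s) (hu : ∀ i, UnitSum (u i)) (hn : 0 < n) :
    1 ≤ rpSW u s := by
  calc (1 : ℝ) = ∑ _i : Fin n, (n : ℝ)⁻¹ := by simp [hn.ne']
    _ ≤ rpSW u s := sum_le_sum fun i _ => hN.inv_le_sum_rpProb_mul (hu i)

lemma RPNash.mul_card_notMem_at_turn_le (hN : RPNash u s) {i : Fin n}
    (hu : ∀ k, 0 ≤ u i k) (j : Fin n) :
    u i j * #{π : Perm (Fin n) | j ∉ sdList s π (π.symm i)}
      ≤ n.factorial * ∑ k, rpProb s i k * u i k := by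
  refine le_trans ?_ (hN.sum_sdAssign_update_le i (Equiv.swap ⟨0, i.pos⟩ j))
  rw [mul_comm, ← nsmul_eq_mul, ← sum_const, ← sum_filter_add_sum_filter_not univ
    fun π : Perm (Fin n) => j ∉ sdList s π (π.symm i)]
  refine le_add_of_le_of_nonneg (le_of_eq (sum_congr rfl fun π hπ => ?_))
    (sum_nonneg fun _ _ => hu _)
  rw [sdAssign_update_swap_of_notMem s π (mem_filter.1 hπ).2]

lemma RPNash.mul_card_notMem_sdList_le_mul (hN : RPNash u s) {i : Fin n} (hu : ∀ k, 0 ≤ u i k)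
    (j : Fin n) {t : ℕ} (ht : 1 ≤ t) (htn : t ≤ n) :
    t * (u i j * #{π : Perm (Fin n) | j ∉ sdList s π t})
      ≤ n * (n.factorial * ∑ k, rpProb s i k * u i k) := by
  set S := #{π : Perm (Fin n) | j ∉ sdList s π (π.symm i)}
  have havail : (t : ℝ) * #{π : Perm (Fin n) | j ∉ sdList s π t} ≤ n * S := by
    exact_mod_cast mul_card_notMem_sdList_le s i j ht htn
  calc (t : ℝ) * (u i j * #{π : Perm (Fin n) | j ∉ sdList s π t})
      = u i j * (t * #{π : Perm (Fin n) | j ∉ sdList s π t}) := by ring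
    _ ≤ u i j * (n * S) := mul_le_mul_of_nonneg_left havail (hu j)
    _ = n * (u i j * S) := by ring
    _ ≤ _ := mul_le_mul_of_nonneg_left (hN.mul_card_notMem_at_turn_le hu j) n.cast_nonneg

lemma sum_sub_card_le_sum_filter_notMem (u : Fin n → Fin n → ℝ) (μ : Perm (Fin n))
    (hu : ∀ i, u i (μ i) ≤ 1) (T : Finset (Fin n)) :
    ∑ i, u i (μ i) - #T ≤ ∑ i with μ i ∉ T, u i (μ i) := by
  have hin : ∑ i with μ i ∈ T, u i (μ i) ≤ #T := by
    calc ∑ i with μ i ∈ T, u i (μ i)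
        ≤ ∑ i with μ i ∈ T, (1 : ℝ) := sum_le_sum fun i _ => hu i
      _ ≤ #T := by
          rw [sum_const, nsmul_one, Nat.cast_le]
          exact card_le_card_of_injOn μ (fun i hi => (mem_filter.1 hi).2) μ.injective.injOn
  rw [← sum_filter_add_sum_filter_not univ fun i => μ i ∈ T]
  linarith

lemma factorial_mul_sub_le_sum_mul_card (s : Fin n → (Fin n ≃ Fin n))
    (u : Fin n → Fin n → ℝ) (μ : Perm (Fin n)) (hu : ∀ i, u i (μ i) ≤ 1) (t : ℕ) :
    n.factorial * (∑ i, u i (μ i) - t)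
      ≤ ∑ i, u i (μ i) * #{π : Perm (Fin n) | μ i ∉ sdList s π t} := by
  have hswap : ∑ i, u i (μ i) * #{π : Perm (Fin n) | μ i ∉ sdList s π t}
      = ∑ π : Perm (Fin n), ∑ i with μ i ∉ sdList s π t, u i (μ i) := by
    simp only [card_filter, Nat.cast_sum, Nat.cast_ite, Nat.cast_one, Nat.cast_zero, mul_sum,
      mul_ite, mul_one, mul_zero, sum_filter]
    exact sum_comm
  rw [hswap]
  calc (n.factorial : ℝ) * (∑ i, u i (μ i) - t)
      = ∑ _π : Perm (Fin n), (∑ i, u i (μ i) - t) := by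
        rw [sum_const, card_univ, Fintype.card_perm, Fintype.card_fin, nsmul_eq_mul]
    _ ≤ _ := sum_le_sum fun π _ => by
      have hlen : #(sdList s π t).toFinset ≤ t :=
        (List.toFinset_card_le _).trans (by rw [length_sdList]; omega)
      have h := sum_sub_card_le_sum_filter_notMem u μ hu (sdList s π t).toFinset
      simp only [List.mem_toFinset] at h
      exact le_trans (by gcongr) h

lemma RPNash.mul_sub_le_rpSW (hN : RPNash u s) (hu : ∀ i, UnitSum (u i)) (μ : Perm (Fin n))
    {t : ℕ} (ht : 1 ≤ t) (htn : t ≤ n) :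
    t * (∑ i, u i (μ i) - t) ≤ n * rpSW u s := by
  have hcount := factorial_mul_sub_le_sum_mul_card s u μ (fun i => (hu i).le_one _) t
  have htotal :
      (n.factorial : ℝ) * (t * (∑ i, u i (μ i) - t)) ≤ n.factorial * (n * rpSW u s) := by
    calc (n.factorial : ℝ) * (t * (∑ i, u i (μ i) - t))
        = t * (n.factorial * (∑ i, u i (μ i) - t)) := by ring
      _ ≤ t * ∑ i, u i (μ i) * #{π : Perm (Fin n) | μ i ∉ sdList s π t} := by gcongr
      _ = ∑ i, t * (u i (μ i) * #{π : Perm (Fin n) | μ i ∉ sdList s π t}) := mul_sum _ _ _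
      _ ≤ ∑ i, n * (n.factorial * ∑ j, rpProb s i j * u i j) := sum_le_sum fun i _ =>
          hN.mul_card_notMem_sdList_le_mul (hu i).1 (μ i) ht htn
      _ = n.factorial * (n * rpSW u s) := by rw [rpSW, ← mul_sum, ← mul_sum]; ring
  exact le_of_mul_le_mul_left htotal (by positivity)

end Welfare

/-- The choice `t = ⌈opt / 2⌉` balances the two factors of `t * (opt - t)`. -/
lemma le_four_mul_sqrt_mul {n : ℕ} {opt sw : ℝ} (hsw : 1 ≤ sw) (hopt : opt ≤ n)
    (h : ∀ t : ℕ, 1 ≤ t → t ≤ n → t * (opt - t) ≤ n * sw) :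
    opt ≤ 4 * √n * sw := by
  have hsqrt : √n * √n = n := Real.mul_self_sqrt n.cast_nonneg
  have hsqrt0 : 0 ≤ √n := Real.sqrt_nonneg _
  rcases le_or_gt opt (4 * √n) with hsmall | hlarge
  · nlinarith
  have hn : 4 < √n := by nlinarith
  have hopt4 : 16 < opt := by nlinarith
  set t := ⌈opt / 2⌉₊
  have ht_ge : opt / 2 ≤ t := Nat.le_ceil _
  have ht_lt : (t : ℝ) < opt / 2 + 1 := Nat.ceil_lt_add_one (by linarith)
  have ht1 : 1 ≤ t := by exact_mod_cast (show (1 : ℝ) ≤ t by linarith)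
  have htn : t ≤ n := by exact_mod_cast (show (t : ℝ) ≤ n by nlinarith)
  have hbalance : opt / 2 * (opt / 4) ≤ t * (opt - t) :=
    mul_le_mul ht_ge (by linarith) (by linarith) (by linarith)
  have hquad : opt * opt ≤ 8 * (√n * √n) * sw := by nlinarith [h t ht1 htn]
  nlinarith

/-- The pure Price of Anarchy of Random Priority is `O(√n)`: there is a universal
constant `C > 0` such that for every `n`, every profile `u` of unit-sum
valuations and every pure Nash equilibrium `s` of Random Priority at `u`,
`SW_OPT(u) ≤ C · √n · SW_RP(u, s)`. -/
theorem rp_pure_poa_sqrt_n :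
    ∃ C : ℝ, 0 < C ∧
      ∀ (n : ℕ) (u : Fin n → Fin n → ℝ) (s : Fin n → (Fin n ≃ Fin n)),
        (∀ i, UnitSum (u i)) → RPNash u s →
        SWopt u ≤ C * Real.sqrt n * rpSW u s := by
  refine ⟨4, by norm_num, fun n u s hu hN => ?_⟩
  rcases Nat.eq_zero_or_pos n with rfl | hn
  · simp [SWopt]
  obtain ⟨μ, -, hμ⟩ := exists_mem_eq_sup' ⟨Equiv.refl (Fin n), mem_univ _⟩
    fun μ : Perm (Fin n) => ∑ i, u i (μ i)
  rw [SWopt, hμ]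
  refine le_four_mul_sqrt_mul (hN.one_le_rpSW hu hn) ?_
    fun t ht htn => hN.mul_sub_le_rpSW hu μ ht htn
  calc ∑ i, u i (μ i) ≤ ∑ _i : Fin n, (1 : ℝ) := sum_le_sum fun i _ => (hu i).le_one _
    _ = n := by simp
end

section
/- In Probabilistic Serial, for any profile s of reported strict orderings, any agent i, any item j, and any ordering s*_i that ranks item j first, the time at which item j is fully consumed satisfies t_j(s*_i, s_{−i}) ≥ (1/4)·t_j(s). -/
/-- The state of the Probabilistic Serial eating process: `rem j` is the remaining
amount of item `j`, `cons i j` the amount of item `j` eaten so far by agent `i`,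
`time` the current time, and `fin j` the time at which item `j` was fully consumed. -/
structure PSState (n : ℕ) where
  rem : Fin n → ℝ
  cons : Fin n → Fin n → ℝ
  time : ℝ
  fin : Fin n → ℝ

open Classical in
/-- One phase of the Probabilistic Serial eating process: while some item remains,
every agent eats at rate 1 from her most preferred remaining item (preference
orderings are given as bijections from ranks to items, rank `0` being the most
preferred); the phase lasts until the first moment a currently eaten item is
exhausted. -/
noncomputable def psStep {n : ℕ} (s : Fin n → (Fin n ≃ Fin n)) (st : PSState n) :
    PSState n :=
  let avail : Finset (Fin n) := Finset.univ.filter (fun j => 0 < st.rem j)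
  if h : avail.Nonempty then
    -- the most preferred still-available item of each agent
    let top : Fin n → Fin n := fun i =>
      let R : Finset (Fin n) := Finset.univ.filter (fun r => s i r ∈ avail)
      if hR : R.Nonempty then s i (R.min' hR) else h.choose
    -- the number of agents currently eating item `j`
    let rate : Fin n → ℕ := fun j => (Finset.univ.filter (fun i => top i = j)).card
    -- the duration of the phase: first time an eaten item is exhausted
    let Δ : ℝ := sInf {x : ℝ | ∃ j ∈ avail, 0 < rate j ∧ x = st.rem j / (rate j : ℝ)}
    { rem := fun j => st.rem j - (rate j : ℝ) * Δ
      cons := fun i j => st.cons i j + (if top i = j then Δ else 0)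
      time := st.time + Δ
      fin := fun j =>
        if 0 < st.rem j ∧ st.rem j - (rate j : ℝ) * Δ ≤ 0 then st.time + Δ else st.fin j }
  else st

/-- The final state of the Probabilistic Serial eating process (there are at most
`n` phases, since in each phase at least one item is exhausted). -/
noncomputable def psFinal {n : ℕ} (s : Fin n → (Fin n ≃ Fin n)) : PSState n :=
  (psStep s)^[n] ⟨fun _ => 1, fun _ _ => 0, 0, fun _ => 1⟩

/-- `psProb s i j` is the probability that agent `i` receives item `j` under
Probabilistic Serial at report profile `s`, i.e. the amount of item `j` eaten by
agent `i`. -/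
noncomputable def psProb {n : ℕ} (s : Fin n → (Fin n ≃ Fin n)) (i j : Fin n) : ℝ :=
  (psFinal s).cons i j

/-- `psTime s j` is the time at which item `j` is fully consumed under
Probabilistic Serial at report profile `s`. -/
noncomputable def psTime {n : ℕ} (s : Fin n → (Fin n ≃ Fin n)) (j : Fin n) : ℝ :=
  (psFinal s).fin j

/-- The expected social welfare of Probabilistic Serial at report profile `s`
under true valuation profile `u`. -/
noncomputable def psSW {n : ℕ} (u : Fin n → Fin n → ℝ) (s : Fin n → (Fin n ≃ Fin n)) : ℝ :=
  ∑ i, ∑ j, psProb s i j * u i j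

/-- `s` is a pure Nash equilibrium of Probabilistic Serial at true valuation
profile `u`: no agent can strictly increase her expected utility by unilaterally
reporting a different ordering. -/
def PSNash {n : ℕ} (u : Fin n → Fin n → ℝ) (s : Fin n → (Fin n ≃ Fin n)) : Prop :=
  ∀ (i : Fin n) (s' : Fin n ≃ Fin n),
    ∑ j, psProb (Function.update s i s') i j * u i j ≤ ∑ j, psProb s i j * u i j

/-!
Let `s'` differ from `s` only in the report of agent `i`, and write `t`, `t'` for exhaustion
times under `s`, `s'`. By induction on the phase in which item `a` is exhausted under `s'`,
`t a ≤ 2 t' a` whenever `t' a < 1/2`. If instead `t a > 2 t' a`, every agent `g ≠ i` who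
eats `a` under `s'` starts at a time `x` by which all items she prefers are gone; by
induction they are gone by `2x` under `s`, so under `s` she eats at least
`t a - 2x > 2 (t' a - x)` of `a`, twice her share under `s'`. Agent `i` eats at most
`t' a < 1/2` of `a` under `s'`, so the others eat more than half of it, and hence under `s`
more than all of it. When `t' a ≥ 1/2`, `t a ≤ 1` suffices.
-/

open Finset

namespace ProbabilisticSerial

variable {n : ℕ}

section Phase

variable (s : Fin n → (Fin n ≃ Fin n)) (st : PSState n)

open Classical in
noncomputable def avail : Finset (Fin n) :=
  univ.filter fun j => 0 < st.rem j

open Classical in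
-- The fallback `i` is never used while some item remains, the only case in which `psStep`
-- consults the top item.
noncomputable def topItem (i : Fin n) : Fin n :=
  if hR : (univ.filter fun r => s i r ∈ avail st).Nonempty then
    s i ((univ.filter fun r => s i r ∈ avail st).min' hR)
  else i

open Classical in
noncomputable def rate (j : Fin n) : ℕ :=
  #(univ.filter fun i => topItem s st i = j)

noncomputable def phaseLength : ℝ :=
  sInf {x : ℝ | ∃ j ∈ avail st, 0 < rate s st j ∧ x = st.rem j / rate s st j}

lemma mem_avail {j : Fin n} : j ∈ avail st ↔ 0 < st.rem j := by
  simp [avail]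

lemma nonempty_rank_filter (h : (avail st).Nonempty) (i : Fin n) :
    (univ.filter fun r => s i r ∈ avail st).Nonempty := by
  obtain ⟨a, ha⟩ := h
  exact ⟨(s i).symm a, by simpa using ha⟩

lemma psStep_of_nonempty (h : (avail st).Nonempty) :
    psStep s st =
      { rem := fun j => st.rem j - rate s st j * phaseLength s st
        cons := fun i j => st.cons i j + if topItem s st i = j then phaseLength s st else 0
        time := st.time + phaseLength s st
        fin := fun j => if 0 < st.rem j ∧ st.rem j - rate s st j * phaseLength s st ≤ 0
          then st.time + phaseLength s st else st.fin j } := by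
  have h' : (univ.filter fun j => 0 < st.rem j).Nonempty := h
  rw [psStep, dif_pos h']
  have htop : ∀ i, (if hR : (univ.filter fun r => s i r ∈
      univ.filter fun j => 0 < st.rem j).Nonempty then
      s i ((univ.filter fun r => s i r ∈ univ.filter fun j => 0 < st.rem j).min' hR)
      else h'.choose) = topItem s st i :=
    fun i => by rw [topItem, dif_pos (nonempty_rank_filter s st h i)]; exact dif_pos _
  simp only [htop]
  rfl

lemma psStep_of_not_nonempty (h : ¬ (avail st).Nonempty) : psStep s st = st := by
  have h' : ¬ (univ.filter fun j => 0 < st.rem j).Nonempty := h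
  rw [psStep, dif_neg h']

lemma topItem_eq_iff (h : (avail st).Nonempty) (i a : Fin n) :
    topItem s st i = a ↔
      0 < st.rem a ∧ ∀ b, (s i).symm b < (s i).symm a → st.rem b ≤ 0 := by
  set R := univ.filter fun r => s i r ∈ avail st
  have hR := nonempty_rank_filter s st h i
  have hmem : ∀ r, r ∈ R ↔ 0 < st.rem (s i r) := by simp [R, mem_avail]
  have hmin := (hmem _).1 (R.min'_mem hR)
  rw [topItem, dif_pos hR]
  constructor
  · rintro rfl
    refine ⟨hmin, fun b hb => not_lt.1 fun hb' => ?_⟩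
    rw [Equiv.symm_apply_apply] at hb
    exact (R.min'_le _ ((hmem _).2 (by simpa using hb'))).not_gt hb
  · rintro ⟨ha, hbefore⟩
    have hle : R.min' hR ≤ (s i).symm a := R.min'_le _ ((hmem _).2 (by simpa using ha))
    rcases hle.lt_or_eq with hlt | heq
    · exact absurd (hbefore _ (by simpa using hlt)) hmin.not_ge
    · rw [heq, Equiv.apply_symm_apply]

lemma sum_rate : ∑ j, (rate s st j : ℝ) = n := by
  classical
  have := card_eq_sum_card_fiberwise (f := topItem s st) (s := univ) (t := univ)
    fun _ _ => mem_univ _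
  simp only [card_univ, Fintype.card_fin] at this
  exact_mod_cast this.symm

lemma mem_avail_of_rate_pos (h : (avail st).Nonempty) {j : Fin n} (hj : 0 < rate s st j) :
    j ∈ avail st := by
  obtain ⟨i, hi⟩ := card_pos.1 hj
  rw [(mem_filter.1 hi).2.symm, mem_avail]
  exact ((topItem_eq_iff s st h i _).1 rfl).1

lemma finite_phaseLength_set :
    {x : ℝ | ∃ j ∈ avail st, 0 < rate s st j ∧ x = st.rem j / rate s st j}.Finite :=
  (Set.finite_range fun j => st.rem j / rate s st j).subset
    fun _ ⟨j, _, _, hx⟩ => ⟨j, hx.symm⟩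

lemma exists_phaseLength_eq (h : (avail st).Nonempty) :
    ∃ j ∈ avail st, 0 < rate s st j ∧ phaseLength s st = st.rem j / rate s st j := by
  obtain ⟨a, -⟩ := id h
  have hrate : 0 < rate s st (topItem s st a) := card_pos.2 ⟨a, by simp⟩
  have hne :
      {x : ℝ | ∃ j ∈ avail st, 0 < rate s st j ∧ x = st.rem j / rate s st j}.Nonempty :=
    ⟨_, _, mem_avail_of_rate_pos s st h hrate, hrate, rfl⟩
  exact hne.csInf_mem (finite_phaseLength_set s st)

lemma phaseLength_pos (h : (avail st).Nonempty) : 0 < phaseLength s st := by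
  obtain ⟨j, hj, hrate, heq⟩ := exists_phaseLength_eq s st h
  rw [heq]
  exact div_pos ((mem_avail st).1 hj) (Nat.cast_pos.2 hrate)

lemma phaseLength_le (h : (avail st).Nonempty) {j : Fin n} (hj : 0 < rate s st j) :
    phaseLength s st ≤ st.rem j / rate s st j :=
  csInf_le (finite_phaseLength_set s st).bddBelow ⟨j, mem_avail_of_rate_pos s st h hj, hj, rfl⟩

lemma exists_rem_sub_eq_zero (h : (avail st).Nonempty) :
    ∃ j, 0 < st.rem j ∧ st.rem j - rate s st j * phaseLength s st = 0 := by
  obtain ⟨j, hj, hrate, heq⟩ := exists_phaseLength_eq s st h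
  refine ⟨j, (mem_avail st).1 hj, ?_⟩
  rw [heq, mul_div_cancel₀ _ (Nat.cast_pos.2 hrate).ne', sub_self]

lemma rem_sub_nonneg (h : (avail st).Nonempty) {j : Fin n} (hj : 0 ≤ st.rem j) :
    0 ≤ st.rem j - rate s st j * phaseLength s st := by
  rcases (rate s st j).eq_zero_or_pos with h0 | hpos
  · simpa [h0] using hj
  · have := (le_div_iff₀ (Nat.cast_pos.2 hpos)).1 (phaseLength_le s st h hpos)
    linarith

end Phase

section Trajectory

variable (s : Fin n → (Fin n ≃ Fin n))

noncomputable def state (k : ℕ) : PSState n :=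
  (psStep s)^[k] ⟨fun _ => 1, fun _ _ => 0, 0, fun _ => 1⟩

def Active (k : ℕ) : Prop :=
  (avail (state s k)).Nonempty

lemma psFinal_eq_state : psFinal s = state s n := rfl

@[simp] lemma time_state_zero : (state s 0).time = 0 := rfl

lemma state_succ (k : ℕ) : state s (k + 1) = psStep s (state s k) :=
  Function.iterate_succ_apply' _ _ _

variable {s} {k : ℕ}

lemma state_succ_of_not_active (h : ¬ Active s k) : state s (k + 1) = state s k := by
  rw [state_succ, psStep_of_not_nonempty _ _ h]

lemma rem_succ (h : Active s k) (j : Fin n) :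
    (state s (k + 1)).rem j =
      (state s k).rem j - rate s (state s k) j * phaseLength s (state s k) := by
  rw [state_succ, psStep_of_nonempty _ _ h]

lemma cons_succ (h : Active s k) (g a : Fin n) :
    (state s (k + 1)).cons g a = (state s k).cons g a +
      if topItem s (state s k) g = a then phaseLength s (state s k) else 0 := by
  rw [state_succ, psStep_of_nonempty _ _ h]

lemma time_succ (h : Active s k) :
    (state s (k + 1)).time = (state s k).time + phaseLength s (state s k) := by
  rw [state_succ, psStep_of_nonempty _ _ h]

lemma fin_succ (h : Active s k) (j : Fin n) :
    (state s (k + 1)).fin j =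
      if 0 < (state s k).rem j ∧ (state s (k + 1)).rem j ≤ 0 then (state s (k + 1)).time
      else (state s k).fin j := by
  rw [rem_succ h, time_succ h, state_succ, psStep_of_nonempty _ _ h]

variable (s)

lemma rem_nonneg (k : ℕ) (j : Fin n) : 0 ≤ (state s k).rem j := by
  induction k with
  | zero => exact zero_le_one
  | succ k ih =>
    by_cases h : Active s k
    · rw [rem_succ h]
      exact rem_sub_nonneg s _ h ih
    · rwa [state_succ_of_not_active h]

lemma time_le_time_succ (k : ℕ) : (state s k).time ≤ (state s (k + 1)).time := by
  by_cases h : Active s k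
  · rw [time_succ h]
    linarith [phaseLength_pos s _ h]
  · rw [state_succ_of_not_active h]

lemma monotone_time : Monotone fun k => (state s k).time :=
  monotone_nat_of_le_succ (time_le_time_succ s)

lemma time_nonneg (k : ℕ) : 0 ≤ (state s k).time :=
  monotone_time s k.zero_le

lemma rem_succ_le (k : ℕ) (j : Fin n) : (state s (k + 1)).rem j ≤ (state s k).rem j := by
  by_cases h : Active s k
  · rw [rem_succ h]
    exact sub_le_self _ (mul_nonneg (Nat.cast_nonneg _) (phaseLength_pos s _ h).le)
  · rw [state_succ_of_not_active h]

lemma antitone_rem (j : Fin n) : Antitone fun k => (state s k).rem j :=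
  antitone_nat_of_succ_le fun k => rem_succ_le s k j

lemma sum_rem (k : ℕ) : ∑ j, (state s k).rem j = n * (1 - (state s k).time) := by
  induction k with
  | zero => simp [state]
  | succ k ih =>
    by_cases h : Active s k
    · simp only [rem_succ h, time_succ h, sum_sub_distrib, ← sum_mul, sum_rate, ih]
      ring
    · rwa [state_succ_of_not_active h]

lemma card_avail_le (k : ℕ) : #(avail (state s k)) ≤ n - k := by
  induction k with
  | zero => simpa using card_le_univ (avail (state s 0))
  | succ k ih =>
    by_cases h : Active s k
    · have hsub : avail (state s (k + 1)) ⊂ avail (state s k) := by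
        refine ssubset_iff_of_subset (fun j hj => ?_) |>.2 ?_
        · rw [mem_avail] at hj ⊢
          exact hj.trans_le (rem_succ_le s k j)
        · obtain ⟨j, hj, hj0⟩ := exists_rem_sub_eq_zero s _ h
          exact ⟨j, (mem_avail _).2 hj, by rw [mem_avail, rem_succ h, hj0]; exact lt_irrefl 0⟩
      have := card_lt_card hsub
      omega
    · rw [state_succ_of_not_active h, not_nonempty_iff_eq_empty.1 h, card_empty]
      exact Nat.zero_le _

lemma rem_state_n (j : Fin n) : (state s n).rem j = 0 := by
  have hempty : avail (state s n) = ∅ := card_eq_zero.1 (by simpa using card_avail_le s n)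
  have hj : j ∉ avail (state s n) := by simp [hempty]
  exact le_antisymm (not_lt.1 fun h => hj ((mem_avail _).2 h)) (rem_nonneg s n j)

end Trajectory

section Exhaustion

variable (s : Fin n → (Fin n ≃ Fin n))

noncomputable def exhaustPhase (j : Fin n) : ℕ :=
  sInf {k | (state s k).rem j ≤ 0}

noncomputable def exhaustTime (j : Fin n) : ℝ :=
  (state s (exhaustPhase s j)).time

variable {s} {k : ℕ} {j : Fin n}

lemma lt_exhaustPhase_iff : k < exhaustPhase s j ↔ 0 < (state s k).rem j := by
  refine ⟨fun hk => by simpa using Nat.notMem_of_lt_sInf hk, fun hpos => ?_⟩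
  by_contra! hle
  have hex : (state s (exhaustPhase s j)).rem j ≤ 0 :=
    Nat.sInf_mem (s := {k | (state s k).rem j ≤ 0}) ⟨n, (rem_state_n s j).le⟩
  linarith [antitone_rem s j hle]

lemma exhaustPhase_le_iff : exhaustPhase s j ≤ k ↔ (state s k).rem j ≤ 0 := by
  rw [← not_lt, lt_exhaustPhase_iff, not_lt]

lemma active_of_lt_exhaustPhase (hk : k < exhaustPhase s j) : Active s k :=
  ⟨j, (mem_avail _).2 (lt_exhaustPhase_iff.1 hk)⟩

variable (s j)

lemma exhaustPhase_le : exhaustPhase s j ≤ n :=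
  exhaustPhase_le_iff.2 (rem_state_n s j).le

lemma exhaustPhase_pos : 0 < exhaustPhase s j :=
  lt_exhaustPhase_iff.2 zero_lt_one

lemma exhaustTime_nonneg : 0 ≤ exhaustTime s j :=
  time_nonneg s _

lemma exhaustTime_le_one : exhaustTime s j ≤ 1 := by
  have h : 0 ≤ (n : ℝ) * (1 - exhaustTime s j) :=
    sum_rem s (exhaustPhase s j) ▸ sum_nonneg fun _ _ => rem_nonneg s _ _
  linarith [(mul_nonneg_iff_of_pos_left (Nat.cast_pos.2 j.pos)).1 h]

lemma fin_state (k : ℕ) :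
    (state s k).fin j = if exhaustPhase s j ≤ k then exhaustTime s j else 1 := by
  induction k with
  | zero => rw [if_neg (exhaustPhase_pos s j).not_ge]; rfl
  | succ k ih =>
    by_cases h : Active s k
    · have hiff : (0 < (state s k).rem j ∧ (state s (k + 1)).rem j ≤ 0) ↔
          exhaustPhase s j = k + 1 := by
        rw [← exhaustPhase_le_iff, ← lt_exhaustPhase_iff]
        omega
      rw [fin_succ h, ih]
      by_cases he : exhaustPhase s j = k + 1
      · rw [if_pos (hiff.2 he), if_pos he.le, exhaustTime, he]
      · rw [if_neg (mt hiff.1 he)]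
        simp only [show exhaustPhase s j ≤ k ↔ exhaustPhase s j ≤ k + 1 by omega]
    · have hle : exhaustPhase s j ≤ k := not_lt.1 fun hk => h (active_of_lt_exhaustPhase hk)
      rw [state_succ_of_not_active h, ih, if_pos hle, if_pos (hle.trans k.le_succ)]

lemma psTime_eq_exhaustTime : psTime s j = exhaustTime s j := by
  rw [psTime, psFinal_eq_state, fin_state, if_pos (exhaustPhase_le s j)]

end Exhaustion

section Eating

variable (s : Fin n → (Fin n ≃ Fin n))

def Eats (k : ℕ) (g a : Fin n) : Prop :=
  Active s k ∧ topItem s (state s k) g = a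

noncomputable def phaseDuration (k : ℕ) : ℝ :=
  (state s (k + 1)).time - (state s k).time

lemma phaseDuration_nonneg (k : ℕ) : 0 ≤ phaseDuration s k :=
  sub_nonneg.2 (time_le_time_succ s k)

lemma sum_Ico_phaseDuration {k l : ℕ} (hkl : k ≤ l) :
    ∑ p ∈ Ico k l, phaseDuration s p = (state s l).time - (state s k).time :=
  sum_Ico_sub (fun k => (state s k).time) hkl

open Classical in
lemma cons_state (k : ℕ) (g a : Fin n) :
    (state s k).cons g a = ∑ p ∈ range k, if Eats s p g a then phaseDuration s p else 0 := by
  induction k with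
  | zero => rfl
  | succ k ih =>
    rw [sum_range_succ, ← ih]
    by_cases h : Active s k
    · simp only [cons_succ h, Eats, h, true_and, phaseDuration, time_succ h, add_sub_cancel_left]
    · simp [Eats, h, state_succ_of_not_active h]

lemma sum_cons_add_rem (k : ℕ) (a : Fin n) :
    ∑ g, (state s k).cons g a + (state s k).rem a = 1 := by
  induction k with
  | zero => simp [state]
  | succ k ih =>
    by_cases h : Active s k
    · rw [← ih]
      simp only [cons_succ h, rem_succ h, sum_add_distrib, ← sum_filter, sum_const, nsmul_eq_mul,
        rate]
      ring
    · rwa [state_succ_of_not_active h]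

lemma sum_psProb (a : Fin n) : ∑ g, psProb s g a = 1 := by
  have := sum_cons_add_rem s n a
  rwa [rem_state_n, add_zero] at this

open Classical in
lemma psProb_eq_sum (g a : Fin n) :
    psProb s g a = ∑ p ∈ range n, if Eats s p g a then phaseDuration s p else 0 :=
  cons_state s n g a

lemma psProb_nonneg (g a : Fin n) : 0 ≤ psProb s g a := by
  rw [psProb_eq_sum]
  exact sum_nonneg fun p _ => by split_ifs <;> simp [phaseDuration_nonneg]

variable {s} {k : ℕ} {g a : Fin n}

lemma lt_exhaustPhase_of_eats (h : Eats s k g a) : k < exhaustPhase s a :=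
  lt_exhaustPhase_iff.2 ((topItem_eq_iff _ _ h.1 _ _).1 h.2).1

lemma psProb_le_exhaustTime_sub_time (hk : k ≤ exhaustPhase s a)
    (hstart : ∀ p, Eats s p g a → k ≤ p) :
    psProb s g a ≤ exhaustTime s a - (state s k).time := by
  classical
  rw [exhaustTime, ← sum_Ico_phaseDuration s hk, psProb_eq_sum, ← sum_filter]
  refine sum_le_sum_of_subset_of_nonneg (fun p hp => ?_) fun p _ _ => phaseDuration_nonneg s p
  have hp := (mem_filter.1 hp).2
  exact mem_Ico.2 ⟨hstart p hp, lt_exhaustPhase_of_eats hp⟩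

lemma exhaustTime_sub_time_le_psProb (heats : ∀ p ∈ Ico k (exhaustPhase s a), Eats s p g a) :
    exhaustTime s a - (state s k).time ≤ psProb s g a := by
  classical
  rcases le_or_gt k (exhaustPhase s a) with hk | hk
  · rw [exhaustTime, ← sum_Ico_phaseDuration s hk, psProb_eq_sum, ← sum_filter]
    refine sum_le_sum_of_subset_of_nonneg (fun p hp => mem_filter.2 ⟨?_, heats p hp⟩)
      fun p _ _ => phaseDuration_nonneg s p
    exact mem_range.2 ((mem_Ico.1 hp).2.trans_le (exhaustPhase_le s a))
  · have : exhaustTime s a ≤ (state s k).time := monotone_time s hk.le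
    linarith [psProb_nonneg s g a]

lemma psProb_le_exhaustTime : psProb s g a ≤ exhaustTime s a := by
  simpa using psProb_le_exhaustTime_sub_time (Nat.zero_le _) fun p _ => p.zero_le

lemma exists_start_of_psProb_ne_zero (h : psProb s g a ≠ 0) :
    ∃ x, 0 ≤ x ∧ psProb s g a ≤ exhaustTime s a - x ∧
      ∀ b, (s g).symm b < (s g).symm a →
        exhaustPhase s b < exhaustPhase s a ∧ exhaustTime s b ≤ x := by
  classical
  have hex : ∃ p, Eats s p g a := by
    by_contra! hno
    exact h (by rw [psProb_eq_sum]; exact sum_eq_zero fun p _ => if_neg (hno p))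
  have hp₀ : Eats s (Nat.find hex) g a := Nat.find_spec hex
  have hlt := lt_exhaustPhase_of_eats hp₀
  have hbefore := ((topItem_eq_iff _ _ hp₀.1 _ _).1 hp₀.2).2
  refine ⟨_, time_nonneg s _,
    psProb_le_exhaustTime_sub_time hlt.le fun p hp => Nat.find_min' hex hp, fun b hb => ?_⟩
  have hEb : exhaustPhase s b ≤ Nat.find hex := exhaustPhase_le_iff.2 (hbefore b hb)
  exact ⟨hEb.trans_lt hlt, monotone_time s hEb⟩

lemma exhaustTime_sub_le_psProb {y : ℝ} (hy : 0 ≤ y)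
    (hbefore : ∀ b, (s g).symm b < (s g).symm a → exhaustTime s b ≤ y) :
    exhaustTime s a - y ≤ psProb s g a := by
  classical
  rcases le_or_gt (exhaustTime s a) y with hle | hlt
  · linarith [psProb_nonneg s g a]
  have hex : ∃ q, y < (state s (q + 1)).time :=
    ⟨exhaustPhase s a - 1, by rwa [Nat.sub_add_cancel (exhaustPhase_pos s a)]⟩
  -- `q` is the phase during which time `y` is passed.
  set q := Nat.find hex
  have hq_le : (state s q).time ≤ y := by
    cases hq : q with
    | zero => exact hy
    | succ m => exact not_lt.1 (Nat.find_min hex (by omega : m < q))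
  have heats : ∀ p ∈ Ico q (exhaustPhase s a), Eats s p g a := by
    intro p hp
    obtain ⟨hqp, hpa⟩ := mem_Ico.1 hp
    have hact := active_of_lt_exhaustPhase hpa
    refine ⟨hact, (topItem_eq_iff _ _ hact _ _).2
      ⟨lt_exhaustPhase_iff.1 hpa, fun b hb => ?_⟩⟩
    refine exhaustPhase_le_iff.1 (not_lt.1 fun hpb => ?_)
    have : (state s (q + 1)).time ≤ exhaustTime s b := monotone_time s (by omega)
    linarith [Nat.find_spec hex, hbefore b hb]
  linarith [exhaustTime_sub_time_le_psProb heats]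

end Eating

lemma one_half_le_of_two_mul_le {ι : Type*} [Fintype ι] [DecidableEq ι] {f g : ι → ℝ}
    (hf : ∑ x, f x = 1) (hg : ∑ x, g x = 1) {i : ι} (hfi : 0 ≤ f i)
    (h : ∀ x, x ≠ i → 2 * g x ≤ f x) : 1 / 2 ≤ g i := by
  rw [← add_sum_erase _ _ (mem_univ i)] at hf hg
  have : ∑ x ∈ univ.erase i, 2 * g x ≤ ∑ x ∈ univ.erase i, f x :=
    sum_le_sum fun x hx => h x (ne_of_mem_erase hx)
  rw [← mul_sum] at this
  linarith

theorem exhaustTime_le_two_mul {s s' : Fin n → (Fin n ≃ Fin n)} {i : Fin n}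
    (hs : ∀ g, g ≠ i → s' g = s g) (a : Fin n) (ha : exhaustTime s' a < 1 / 2) :
    exhaustTime s a ≤ 2 * exhaustTime s' a := by
  induction hN : exhaustPhase s' a using Nat.strong_induction_on generalizing a with
  | _ N ih =>
  by_contra! hgt
  have hother : ∀ g, g ≠ i → 2 * psProb s' g a ≤ psProb s g a := by
    intro g hg
    by_cases h0 : psProb s' g a = 0
    · rw [h0, mul_zero]
      exact psProb_nonneg s g a
    obtain ⟨x, hx0, hxa, hxb⟩ := exists_start_of_psProb_ne_zero h0
    have hlower : exhaustTime s a - 2 * x ≤ psProb s g a := by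
      refine exhaustTime_sub_le_psProb (by positivity) fun b hb => ?_
      rw [← hs g hg] at hb
      obtain ⟨hEb, hTb⟩ := hxb b hb
      have hb2 := ih _ (hN ▸ hEb) b (by linarith [psProb_nonneg s' g a]) rfl
      linarith
    linarith
  have hi := one_half_le_of_two_mul_le (sum_psProb s a) (sum_psProb s' a) (psProb_nonneg s i a)
    hother
  linarith [psProb_le_exhaustTime (s := s') (g := i) (a := a)]

end ProbabilisticSerial

open ProbabilisticSerial

theorem ps_time_deviation_general {n : ℕ} (s : Fin n → (Fin n ≃ Fin n)) (i : Fin n)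
    (j : Fin n) (sStar : Fin n ≃ Fin n) :
    (1 / 4 : ℝ) * psTime s j ≤ psTime (Function.update s i sStar) j := by
  rw [psTime_eq_exhaustTime, psTime_eq_exhaustTime]
  have hle_one := exhaustTime_le_one s j
  have hnonneg := exhaustTime_nonneg (Function.update s i sStar) j
  rcases lt_or_ge (exhaustTime (Function.update s i sStar) j) (1 / 2) with h | h
  · linarith [exhaustTime_le_two_mul (fun g hg => Function.update_of_ne hg sStar s) j h]
  · linarith

/-- In Probabilistic Serial, for any report profile `s`, any agent `i`, any item
`j`, and any ordering `sStar` that ranks item `j` first, the time at which item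
`j` is fully consumed satisfies `t_j(sStar, s_{-i}) ≥ (1/4) · t_j(s)`. -/
theorem ps_time_deviation {n : ℕ} (s : Fin n → (Fin n ≃ Fin n)) (i : Fin n)
    (j : Fin n) (sStar : Fin n ≃ Fin n)
    (hfirst : ∀ ℓ : Fin n, sStar.symm j ≤ sStar.symm ℓ) :
    (1 / 4 : ℝ) * psTime s j ≤ psTime (Function.update s i sStar) j :=
  ps_time_deviation_general s i j sStar
end

section
/- Let u be a profile of true (nonnegative) valuations and let s be a pure Nash equilibrium of Probabilistic Serial at u. Then for every agent i and every item j, the expected utility of agent i at s satisfies ∑_ℓ p_{iℓ}(s)·u_i(ℓ) ≥ (1/4)·t_j(s)·u_i(j). -/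
/-!
In Probabilistic Serial an agent eats item `j` exactly from the moment the last item she prefers
to `j` runs out until `j` itself runs out. Comparing two report profiles that differ only in one
agent's report, induction along the exhaustion times shows that no item lasts more than twice as
long in one profile as in the other. So if agent `i` deviates by ranking `j` first, she receives
`t_j(s') ≥ t_j(s) / 2` of `j`; in equilibrium her utility is at least her utility after this
deviation, hence at least `u_i(j) · t_j(s) / 2`.
-/

namespace PS

open Finset

variable {n : ℕ}

section Phase

noncomputable def avail (st : PSState n) : Finset (Fin n) := univ.filter (fun j => 0 < st.rem j)

theorem mem_avail {st : PSState n} {j : Fin n} : j ∈ avail st ↔ 0 < st.rem j := by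
  simp [avail]

variable (s : Fin n → (Fin n ≃ Fin n)) {st : PSState n}

open Classical in
noncomputable def top (h : (avail st).Nonempty) (i : Fin n) : Fin n :=
  let R : Finset (Fin n) := univ.filter (fun r => s i r ∈ avail st)
  if hR : R.Nonempty then s i (R.min' hR) else h.choose

open Classical in
noncomputable def rate (h : (avail st).Nonempty) (j : Fin n) : ℕ :=
  #(univ.filter (fun i => top s h i = j))

open Classical in
noncomputable def phaseLength (h : (avail st).Nonempty) : ℝ :=
  sInf {x : ℝ | ∃ j ∈ avail st, 0 < rate s h j ∧ x = st.rem j / (rate s h j : ℝ)}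

theorem psStep_of_nonempty (h : (avail st).Nonempty) :
    psStep s st =
      { rem := fun j => st.rem j - (rate s h j : ℝ) * phaseLength s h
        cons := fun i j => st.cons i j + (if top s h i = j then phaseLength s h else 0)
        time := st.time + phaseLength s h
        fin := fun j =>
          if 0 < st.rem j ∧ st.rem j - (rate s h j : ℝ) * phaseLength s h ≤ 0 then
            st.time + phaseLength s h
          else st.fin j } := by
  simp only [avail] at h
  rw [psStep, dif_pos h]
  rfl

theorem psStep_of_not_nonempty (h : ¬ (avail st).Nonempty) : psStep s st = st := by
  simp only [avail] at h
  rw [psStep, dif_neg h]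

theorem psStep_rem (h : (avail st).Nonempty) (j : Fin n) :
    (psStep s st).rem j = st.rem j - (rate s h j : ℝ) * phaseLength s h := by
  rw [psStep_of_nonempty s h]

theorem psStep_cons (h : (avail st).Nonempty) (i j : Fin n) :
    (psStep s st).cons i j = st.cons i j + (if top s h i = j then phaseLength s h else 0) := by
  rw [psStep_of_nonempty s h]

theorem psStep_time (h : (avail st).Nonempty) :
    (psStep s st).time = st.time + phaseLength s h := by
  rw [psStep_of_nonempty s h]

theorem psStep_fin (h : (avail st).Nonempty) (j : Fin n) :
    (psStep s st).fin j =
      if 0 < st.rem j ∧ st.rem j - (rate s h j : ℝ) * phaseLength s h ≤ 0 then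
        st.time + phaseLength s h
      else st.fin j := by
  rw [psStep_of_nonempty s h]

theorem top_eq_iff (h : (avail st).Nonempty) (i j : Fin n) :
    top s h i = j ↔ j ∈ avail st ∧ ∀ m, (s i).symm m < (s i).symm j → m ∉ avail st := by
  set R := univ.filter (fun r => s i r ∈ avail st)
  have hR : R.Nonempty := by
    obtain ⟨j₀, hj₀⟩ := h
    exact ⟨(s i).symm j₀, by simpa [R] using hj₀⟩
  have htop : top s h i = s i (R.min' hR) := by
    show (if hR : R.Nonempty then _ else _) = _
    exact dif_pos hR
  rw [htop, ← Equiv.eq_symm_apply, Finset.min'_eq_iff]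
  simp only [R, mem_filter, mem_univ, true_and, Equiv.apply_symm_apply]
  refine and_congr_right fun _ => ⟨fun hle m hm hma => ?_, fun hbetter r hr => ?_⟩
  · exact absurd (hle ((s i).symm m) (by simpa using hma)) (by simpa using hm)
  · exact not_lt.mp fun hlt => hbetter (s i r) (by simpa using hlt) hr

theorem top_mem (h : (avail st).Nonempty) (i : Fin n) : top s h i ∈ avail st :=
  ((top_eq_iff s h i _).mp rfl).1

theorem rate_eq_zero (h : (avail st).Nonempty) {j : Fin n} (hj : j ∉ avail st) :
    rate s h j = 0 := by
  rw [rate, card_eq_zero, filter_eq_empty_iff]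
  rintro i - rfl
  exact hj (top_mem s h i)

theorem sum_rate (h : (avail st).Nonempty) : ∑ j, rate s h j = n := by
  simpa [rate] using (card_eq_sum_card_fiberwise (f := top s h) (s := univ) (t := univ)
    fun _ _ => mem_univ _).symm

theorem phaseLength_spec (h : (avail st).Nonempty) :
    (∃ j ∈ avail st, 0 < rate s h j ∧ phaseLength s h = st.rem j / rate s h j) ∧
      ∀ j ∈ avail st, 0 < rate s h j → phaseLength s h ≤ st.rem j / rate s h j := by
  set S := {x : ℝ | ∃ j ∈ avail st, 0 < rate s h j ∧ x = st.rem j / (rate s h j : ℝ)}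
  have hfin : S.Finite :=
    (Set.finite_range fun j => st.rem j / (rate s h j : ℝ)).subset
      (by rintro _ ⟨j, -, -, rfl⟩; exact ⟨j, rfl⟩)
  obtain ⟨j₀, -⟩ := id h
  have hne : S.Nonempty := by
    refine ⟨_, top s h j₀, top_mem s h j₀, ?_, rfl⟩
    exact card_pos.mpr ⟨j₀, by simp⟩
  exact ⟨hne.csInf_mem hfin, fun j hj hr => csInf_le hfin.bddBelow ⟨j, hj, hr, rfl⟩⟩

theorem phaseLength_pos (h : (avail st).Nonempty) : 0 < phaseLength s h := by
  obtain ⟨j, hj, hr, hΔ⟩ := (phaseLength_spec s h).1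
  rw [hΔ]
  exact div_pos (mem_avail.mp hj) (by exact_mod_cast hr)

theorem rate_mul_phaseLength_le (h : (avail st).Nonempty) (hrem : ∀ j, 0 ≤ st.rem j)
    (j : Fin n) : (rate s h j : ℝ) * phaseLength s h ≤ st.rem j := by
  rcases Nat.eq_zero_or_pos (rate s h j) with hr | hr
  · simp [hr, hrem j]
  · have hj : j ∈ avail st := by_contra fun hj => hr.ne' (rate_eq_zero s h hj)
    have hr' : (0 : ℝ) < rate s h j := by exact_mod_cast hr
    have := (phaseLength_spec s h).2 j hj hr
    rwa [le_div_iff₀ hr', mul_comm] at this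

end Phase

section Stages

variable (s : Fin n → (Fin n ≃ Fin n))

noncomputable def stage (k : ℕ) : PSState n :=
  (psStep s)^[k] ⟨fun _ => 1, fun _ _ => 0, 0, fun _ => 1⟩

theorem stage_succ (k : ℕ) : stage s (k + 1) = psStep s (stage s k) :=
  Function.iterate_succ_apply' _ _ _

theorem stage_succ_of_not_nonempty {k : ℕ} (h : ¬ (avail (stage s k)).Nonempty) :
    stage s (k + 1) = stage s k := by
  rw [stage_succ, psStep_of_not_nonempty s h]

theorem rem_nonneg (k : ℕ) (j : Fin n) : 0 ≤ (stage s k).rem j := by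
  induction k generalizing j with
  | zero => exact zero_le_one
  | succ k ih =>
    by_cases h : (avail (stage s k)).Nonempty
    · rw [stage_succ, psStep_rem s h]
      linarith [rate_mul_phaseLength_le s h ih j]
    · rw [stage_succ_of_not_nonempty s h]
      exact ih j

theorem rem_antitone (j : Fin n) : Antitone fun k => (stage s k).rem j := by
  refine antitone_nat_of_succ_le fun k => ?_
  by_cases h : (avail (stage s k)).Nonempty
  · rw [stage_succ, psStep_rem s h]
    have := phaseLength_pos s h
    have : (0 : ℝ) ≤ rate s h j := Nat.cast_nonneg _
    nlinarith
  · rw [stage_succ_of_not_nonempty s h]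

theorem time_lt_succ {k : ℕ} (h : (avail (stage s k)).Nonempty) :
    (stage s k).time < (stage s (k + 1)).time := by
  rw [stage_succ, psStep_time s h]
  linarith [phaseLength_pos s h]

theorem time_monotone : Monotone fun k => (stage s k).time := by
  refine monotone_nat_of_le_succ fun k => ?_
  by_cases h : (avail (stage s k)).Nonempty
  · exact (time_lt_succ s h).le
  · rw [stage_succ_of_not_nonempty s h]

theorem time_nonneg (k : ℕ) : 0 ≤ (stage s k).time :=
  time_monotone s (Nat.zero_le k)

/-- Every phase exhausts an item, so after `n` phases nothing is left. -/
theorem avail_stage_eq_empty : avail (stage s n) = ∅ := by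
  have key : ∀ k, avail (stage s k) = ∅ ∨ #(avail (stage s k)) + k ≤ n := by
    intro k
    induction k with
    | zero => exact Or.inr (by simpa using card_le_univ (avail (stage s 0)))
    | succ k ih =>
      by_cases h : (avail (stage s k)).Nonempty
      · refine ih.imp (fun he => absurd he h.ne_empty) fun hk => ?_
        obtain ⟨j, hj, hr, hΔ⟩ := (phaseLength_spec s h).1
        have hexhaust : j ∉ avail (stage s (k + 1)) := by
          have : (rate s h j : ℝ) ≠ 0 := by exact_mod_cast hr.ne'
          rw [mem_avail, stage_succ, psStep_rem s h, hΔ, mul_div_cancel₀ _ this, sub_self]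
          exact lt_irrefl 0
        have hsub : avail (stage s (k + 1)) ⊂ avail (stage s k) :=
          ssubset_of_subset_of_ne
            (fun m hm => mem_avail.mpr <| (mem_avail.mp hm).trans_le (rem_antitone s m k.le_succ))
            fun heq => hexhaust (heq ▸ hj)
        have := card_lt_card hsub
        omega
      · rw [stage_succ_of_not_nonempty s h]
        exact Or.inl (not_nonempty_iff_eq_empty.mp h)
  rcases key n with he | hc
  · exact he
  · exact card_eq_zero.mp (by omega)

theorem rem_stage_eq_zero {k : ℕ} (hk : n ≤ k) (j : Fin n) : (stage s k).rem j = 0 := by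
  have hj : j ∉ avail (stage s n) := by simp [avail_stage_eq_empty]
  exact le_antisymm ((rem_antitone s j hk).trans (not_lt.mp (mem_avail.not.mp hj)))
    (rem_nonneg s k j)

theorem sum_rem (k : ℕ) : ∑ j, (stage s k).rem j = n * (1 - (stage s k).time) := by
  induction k with
  | zero => simp [stage]
  | succ k ih =>
    by_cases h : (avail (stage s k)).Nonempty
    · simp only [stage_succ, psStep_rem s h, psStep_time s h, sum_sub_distrib, ← sum_mul,
        ← Nat.cast_sum, sum_rate s h, ih]
      ring
    · rw [stage_succ_of_not_nonempty s h, ih]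

theorem time_le_one [NeZero n] (k : ℕ) : (stage s k).time ≤ 1 := by
  have hsum : 0 ≤ ∑ j, (stage s k).rem j := sum_nonneg fun j _ => rem_nonneg s k j
  rw [sum_rem] at hsum
  have : (0 : ℝ) < n := by exact_mod_cast NeZero.pos n
  nlinarith

theorem sum_cons_add_rem (k : ℕ) (j : Fin n) :
    ∑ i, (stage s k).cons i j + (stage s k).rem j = 1 := by
  induction k with
  | zero => simp [stage]
  | succ k ih =>
    by_cases h : (avail (stage s k)).Nonempty
    · have heaten : ∑ i, (if top s h i = j then phaseLength s h else 0)
          = (rate s h j : ℝ) * phaseLength s h := by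
        rw [← sum_filter, sum_const, nsmul_eq_mul, rate]
      simp only [stage_succ, psStep_cons s h, psStep_rem s h, sum_add_distrib, heaten]
      linarith
    · rw [stage_succ_of_not_nonempty s h, ih]

end Stages

section ExhaustionTime

variable (s : Fin n → (Fin n ≃ Fin n))

theorem psTime_eq_fin_stage (j : Fin n) : psTime s j = (stage s n).fin j := rfl

theorem fin_succ_of_rem_eq_zero {k : ℕ} {j : Fin n} (hj : (stage s k).rem j = 0) :
    (stage s (k + 1)).fin j = (stage s k).fin j := by
  by_cases h : (avail (stage s k)).Nonempty
  · rw [stage_succ, psStep_fin s h, if_neg (by rw [hj]; exact fun h => lt_irrefl 0 h.1)]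
  · rw [stage_succ_of_not_nonempty s h]

theorem fin_succ_of_exhausted {k : ℕ} {j : Fin n} (halive : 0 < (stage s k).rem j)
    (hdead : (stage s (k + 1)).rem j = 0) : (stage s (k + 1)).fin j = (stage s (k + 1)).time := by
  have h : (avail (stage s k)).Nonempty := ⟨j, mem_avail.mpr halive⟩
  rw [stage_succ, psStep_rem s h] at hdead
  rw [stage_succ, psStep_fin s h, if_pos ⟨halive, hdead.le⟩, psStep_time s h]

theorem exists_psTime_eq_time (j : Fin n) :
    ∃ l, 0 < (stage s l).rem j ∧ (stage s (l + 1)).rem j = 0 ∧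
      psTime s j = (stage s (l + 1)).time := by
  classical
  have hex : ∃ k, (stage s k).rem j = 0 := ⟨n, rem_stage_eq_zero s le_rfl j⟩
  have hpos : Nat.find hex ≠ 0 := fun h0 => by
    have := Nat.find_spec hex
    rw [h0] at this
    exact one_ne_zero this
  obtain ⟨l, hl⟩ := Nat.exists_eq_succ_of_ne_zero hpos
  have hdead : (stage s (l + 1)).rem j = 0 := by
    have := Nat.find_spec hex
    rwa [hl] at this
  have halive : 0 < (stage s l).rem j :=
    (rem_nonneg s l j).lt_of_ne' (Nat.find_min hex (by omega))
  have hfrozen : ∀ m, l + 1 ≤ m → (stage s m).fin j = (stage s (l + 1)).fin j := by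
    intro m hm
    induction m, hm using Nat.le_induction with
    | base => rfl
    | succ m hm ih =>
      rw [fin_succ_of_rem_eq_zero s (le_antisymm (hdead ▸ rem_antitone s j hm)
        (rem_nonneg s m j)), ih]
  have hln : l + 1 ≤ n := by
    have := Nat.find_min' hex (rem_stage_eq_zero s le_rfl j)
    omega
  refine ⟨l, halive, hdead, ?_⟩
  rw [psTime_eq_fin_stage, hfrozen n hln, fin_succ_of_exhausted s halive hdead]

theorem le_of_rem_pos_of_rem_succ_eq_zero {k l : ℕ} {j : Fin n} (hk : 0 < (stage s k).rem j)
    (hl : (stage s (l + 1)).rem j = 0) : k ≤ l :=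
  not_lt.mp fun hlk => (hk.trans_le (rem_antitone s j (hlk : l + 1 ≤ k))).ne' hl

theorem time_lt_psTime_iff (k : ℕ) (j : Fin n) :
    (stage s k).time < psTime s j ↔ 0 < (stage s k).rem j := by
  obtain ⟨l, halive, hdead, ht⟩ := exists_psTime_eq_time s j
  rw [ht]
  constructor
  · intro hlt
    have hk : k ≤ l := not_lt.mp fun hlk => (time_monotone s (hlk : l + 1 ≤ k)).not_gt hlt
    exact halive.trans_le (rem_antitone s j hk)
  · intro hk
    exact (time_monotone s (le_of_rem_pos_of_rem_succ_eq_zero s hk hdead)).trans_lt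
      (time_lt_succ s ⟨j, mem_avail.mpr halive⟩)

theorem time_succ_le_psTime {k : ℕ} {j : Fin n} (hk : 0 < (stage s k).rem j) :
    (stage s (k + 1)).time ≤ psTime s j := by
  obtain ⟨l, -, hdead, ht⟩ := exists_psTime_eq_time s j
  rw [ht]
  exact time_monotone s (Nat.succ_le_succ (le_of_rem_pos_of_rem_succ_eq_zero s hk hdead))

theorem psTime_le_time_stage (j : Fin n) : psTime s j ≤ (stage s n).time :=
  not_lt.mp fun h => ((time_lt_psTime_iff s n j).mp h).ne' (rem_stage_eq_zero s le_rfl j)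

theorem psTime_nonneg (j : Fin n) : 0 ≤ psTime s j := by
  obtain ⟨l, -, -, ht⟩ := exists_psTime_eq_time s j
  exact ht ▸ time_nonneg s _

theorem psTime_le_one (j : Fin n) : psTime s j ≤ 1 :=
  have : NeZero n := ⟨j.pos.ne'⟩
  (psTime_le_time_stage s j).trans (time_le_one s n)

end ExhaustionTime

section StartTime

variable (e : Fin n ≃ Fin n) (t : Fin n → ℝ) (j : Fin n)

/-- The latest exhaustion time, according to `t`, of an item that the ordering `e` ranks above
`j`, or `0` if there is none: from then until `j` runs out, an agent reporting `e` eats `j`. -/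
noncomputable def startTime : ℝ :=
  (insert 0 ((univ.filter fun m => e.symm m < e.symm j).image t)).max' (insert_nonempty _ _)

theorem startTime_nonneg : 0 ≤ startTime e t j :=
  le_max' _ _ (mem_insert_self _ _)

variable {e t j}

theorem le_startTime {m : Fin n} (hm : e.symm m < e.symm j) : t m ≤ startTime e t j :=
  le_max' _ _ (mem_insert_of_mem (mem_image_of_mem t (by simpa using hm)))

theorem startTime_le {b : ℝ} (hb : 0 ≤ b) (h : ∀ m, e.symm m < e.symm j → t m ≤ b) :
    startTime e t j ≤ b :=
  max'_le _ _ _ (by simpa [or_imp, forall_and] using ⟨hb, h⟩)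

end StartTime

section Consumption

variable (s : Fin n → (Fin n ≃ Fin n))

theorem startTime_le_time_of_top_eq {k : ℕ} (h : (avail (stage s k)).Nonempty) {i j : Fin n}
    (htop : top s h i = j) : startTime (s i) (psTime s) j ≤ (stage s k).time := by
  refine startTime_le (time_nonneg s k) fun m hm => not_lt.mp fun hlt => ?_
  exact ((top_eq_iff s h i j).mp htop).2 m hm (mem_avail.mpr ((time_lt_psTime_iff s k m).mp hlt))

theorem time_succ_le_startTime_of_top_ne {k : ℕ} (h : (avail (stage s k)).Nonempty)
    {i j : Fin n} (hj : 0 < (stage s k).rem j) (htop : top s h i ≠ j) :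
    (stage s (k + 1)).time ≤ startTime (s i) (psTime s) j := by
  obtain ⟨hm, hbetter⟩ := (top_eq_iff s h i _).mp rfl
  have hlt : (s i).symm (top s h i) < (s i).symm j :=
    lt_of_le_of_ne (not_lt.mp fun hlt => hbetter j hlt (mem_avail.mpr hj))
      (fun heq => htop ((s i).symm.injective heq))
  exact (time_succ_le_psTime s (mem_avail.mp hm)).trans (le_startTime hlt)

/-- The length of `[startTime, psTime s j] ∩ [0, time]`: agent `i` eats `j` exactly during the
first interval. -/
theorem cons_stage_eq (k : ℕ) (i j : Fin n) :
    (stage s k).cons i j =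
      max 0 (min (stage s k).time (psTime s j) - startTime (s i) (psTime s) j) := by
  have hB := startTime_nonneg (s i) (psTime s) j
  induction k with
  | zero =>
    have : min (0 : ℝ) (psTime s j) = 0 := min_eq_left (psTime_nonneg s j)
    simp [stage, this, hB]
  | succ k ih =>
    by_cases h : (avail (stage s k)).Nonempty
    · have htime := psStep_time s h
      rw [← stage_succ] at htime
      rw [stage_succ, psStep_cons s h, ← stage_succ, ih]
      by_cases htop : top s h i = j
      · have hj := mem_avail.mp ((top_eq_iff s h i j).mp htop).1
        rw [if_pos htop, min_eq_left ((time_lt_psTime_iff s k j).mpr hj).le,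
          min_eq_left (time_succ_le_psTime s hj), htime,
          max_eq_right (sub_nonneg.mpr (startTime_le_time_of_top_eq s h htop)),
          max_eq_right (by linarith [startTime_le_time_of_top_eq s h htop, phaseLength_pos s h])]
        ring
      · rw [if_neg htop, add_zero]
        by_cases hj : 0 < (stage s k).rem j
        · have := time_succ_le_startTime_of_top_ne s h hj htop
          rw [max_eq_left, max_eq_left] <;>
            linarith [min_le_left (stage s k).time (psTime s j),
              min_le_left (stage s (k + 1)).time (psTime s j), time_lt_succ s h]
        · have hT := not_lt.mp ((time_lt_psTime_iff s k j).not.mpr hj)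
          rw [min_eq_right hT, min_eq_right (hT.trans (time_lt_succ s h).le)]
    · rw [stage_succ_of_not_nonempty s h, ih]

theorem psProb_eq_cons_stage (i j : Fin n) : psProb s i j = (stage s n).cons i j := rfl

theorem psProb_eq (i j : Fin n) :
    psProb s i j = max 0 (psTime s j - startTime (s i) (psTime s) j) := by
  rw [psProb_eq_cons_stage, cons_stage_eq,
    min_eq_right (psTime_le_time_stage s j)]

theorem psProb_nonneg (i j : Fin n) : 0 ≤ psProb s i j :=
  (psProb_eq s i j).symm ▸ le_max_left _ _

theorem sum_psProb (j : Fin n) : ∑ i, psProb s i j = 1 := by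
  simpa [psProb_eq_cons_stage, rem_stage_eq_zero s le_rfl j] using sum_cons_add_rem s n j


theorem psProb_le_psTime (i j : Fin n) : psProb s i j ≤ psTime s j := by
  rw [psProb_eq]
  exact max_le (psTime_nonneg s j) (by linarith [startTime_nonneg (s i) (psTime s) j])

theorem psProb_eq_psTime_of_forall_not_lt {i j : Fin n}
    (hfirst : ∀ m, ¬ (s i).symm m < (s i).symm j) : psProb s i j = psTime s j := by
  rw [psProb_eq, le_antisymm (startTime_le le_rfl fun m hm => absurd hm (hfirst m))
    (startTime_nonneg _ _ _), sub_zero, max_eq_right (psTime_nonneg s j)]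

end Consumption

section Deviation

variable {p q : Fin n → (Fin n ≃ Fin n)}

/-- An agent who eats `j` in `q` from `B` until `psTime q j` has lost all items she prefers to `j`
by time `2 * B` in `p`, and then eats `j` until `psTime p j ≥ 2 * psTime q j`. -/
theorem two_mul_psProb_le_psProb {k j : Fin n} (hk : p k = q k)
    (hearlier : ∀ m, psTime q m < psTime q j → psTime p m ≤ 2 * psTime q m)
    (hj : 2 * psTime q j ≤ psTime p j) : 2 * psProb q k j ≤ psProb p k j := by
  set B := startTime (q k) (psTime q) j
  rw [psProb_eq q, psProb_eq p]
  rcases le_or_gt (psTime q j - B) 0 with hle | hlt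
  · rw [max_eq_left hle, mul_zero]
    exact le_max_left _ _
  have hBp : startTime (p k) (psTime p) j ≤ 2 * B := by
    refine startTime_le (by positivity [startTime_nonneg (q k) (psTime q) j]) fun m hm => ?_
    rw [hk] at hm
    have hmB : psTime q m ≤ B := le_startTime hm
    linarith [hearlier m (by linarith)]
  rw [max_eq_right hlt.le]
  exact le_max_of_le_right (by linarith)

/-- Induction on the exhaustion times in `q`: if `j` lasted more than twice as long in `p`, the
agents other than `i` would eat twice their total `≥ 1 - psTime q j > 1/2` of `j` in `p`. -/
theorem psTime_le_two_mul_psTime {i : Fin n} (hpq : ∀ k, k ≠ i → p k = q k) (j : Fin n) :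
    psTime p j ≤ 2 * psTime q j := by
  let r : Fin n → Fin n → Prop := fun a b => psTime q a < psTime q b
  have : IsTrans (Fin n) r := ⟨fun _ _ _ => lt_trans⟩
  have : Std.Irrefl r := ⟨fun _ => lt_irrefl _⟩
  induction j using (Finite.wellFounded_of_trans_of_irrefl r).induction with
  | _ j hearlier =>
  by_contra! hj
  have hothers : 2 * ∑ k ∈ univ.erase i, psProb q k j ≤ ∑ k ∈ univ.erase i, psProb p k j := by
    rw [mul_sum]
    refine sum_le_sum fun k hk => two_mul_psProb_le_psProb (hpq k (ne_of_mem_erase hk))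
      hearlier hj.le
  have hp : ∑ k ∈ univ.erase i, psProb p k j ≤ 1 :=
    (sum_psProb p j).symm ▸ sum_le_sum_of_subset_of_nonneg (erase_subset _ _)
      fun k _ _ => psProb_nonneg p k j
  have hq := add_sum_erase univ (fun k => psProb q k j) (mem_univ i)
  rw [sum_psProb] at hq
  linarith [psProb_le_psTime q i j, psTime_le_one p j]

end Deviation

end PS

open PS in
/-- If `u` is a profile of nonnegative true valuations and `s` is a pure Nash
equilibrium of Probabilistic Serial at `u`, then for every agent `i` and every
item `j`, the expected utility of `i` at `s` is at least `(1/4) · t_j(s) · u_i(j)`. -/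
theorem ps_equilibrium_utility {n : ℕ} (u : Fin n → Fin n → ℝ)
    (s : Fin n → (Fin n ≃ Fin n)) (hu : ∀ i j, 0 ≤ u i j) (hs : PSNash u s) :
    ∀ (i : Fin n) (j : Fin n),
      (1 / 4 : ℝ) * psTime s j * u i j ≤ ∑ ℓ, psProb s i ℓ * u i ℓ := by
  intro i j
  set s' := Function.update s i (Equiv.swap ⟨0, j.pos⟩ j)
  have hfirst : psProb s' i j = psTime s' j := by
    refine psProb_eq_psTime_of_forall_not_lt s' fun m hm => ?_
    simp [s', Fin.lt_def] at hm
  have hhalf : psTime s j ≤ 2 * psTime s' j :=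
    psTime_le_two_mul_psTime (fun k hk => (Function.update_of_ne hk _ s).symm) j
  calc (1 / 4 : ℝ) * psTime s j * u i j ≤ psProb s' i j * u i j := by
        rw [hfirst]
        nlinarith [hu i j, psTime_nonneg s j]
    _ ≤ ∑ ℓ, psProb s' i ℓ * u i ℓ :=
        Finset.single_le_sum (f := fun ℓ => psProb s' i ℓ * u i ℓ)
          (fun ℓ _ => mul_nonneg (psProb_nonneg s' i ℓ) (hu i ℓ)) (Finset.mem_univ j)
    _ ≤ ∑ ℓ, psProb s i ℓ * u i ℓ := hs i _
end

section
/- Let k ≥ 2 and n = k². Let M be any randomized mechanism mapping reported profiles of unit-sum valuations to probability distributions over matchings, and suppose M admits at least one pure Nash equilibrium at every true profile of unit-sum valuations. Then there exist a unit-sum valuation profile w and a pure Nash equilibrium s of M at w such that SW_OPT(w) ≥ √n and SW_M(w,s) ≤ 3. In particular, the pure Price of Anarchy of every such mechanism is at least √n/3 = Ω(√n). -/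
/-- `s` is a pure Nash equilibrium of the (cardinal, randomized) mechanism with
allocation probabilities `p` at true valuation profile `u`: every report is a
unit-sum valuation and no agent can strictly increase her expected utility by
unilaterally changing her report to another unit-sum valuation. -/
def CardinalNash {n : ℕ} (p : (Fin n → Fin n → ℝ) → Fin n → Fin n → ℝ)
    (u s : Fin n → Fin n → ℝ) : Prop :=
  (∀ i, UnitSum (s i)) ∧
    ∀ (i : Fin n) (s' : Fin n → ℝ), UnitSum s' →
      ∑ j, p (Function.update s i s') i j * u i j ≤ ∑ j, p s i j * u i j

/-- Lower bound for all (randomized, cardinal) mechanisms: for `n = k²` with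
`k ≥ 2`, any mechanism (given by allocation probabilities `p` forming a
distribution over matchings, i.e. a doubly stochastic matrix, on unit-sum
reports) that admits a pure Nash equilibrium at every unit-sum profile has a
unit-sum profile `w` and a pure Nash equilibrium `s` at `w` with
`SW_OPT(w) ≥ √n` and `SW_M(w, s) ≤ 3`; hence its pure Price of Anarchy is
`Ω(√n)`. -/
theorem any_mechanism_pure_poa_lower (n k : ℕ) (hk : 2 ≤ k) (hn : n = k ^ 2)
    (p : (Fin n → Fin n → ℝ) → Fin n → Fin n → ℝ)
    (hmatch : ∀ s : Fin n → Fin n → ℝ, (∀ i, UnitSum (s i)) →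
      (∀ i j, 0 ≤ p s i j) ∧ (∀ i, ∑ j, p s i j = 1) ∧ (∀ j, ∑ i, p s i j = 1))
    (hex : ∀ u : Fin n → Fin n → ℝ, (∀ i, UnitSum (u i)) →
      ∃ s, CardinalNash p u s) :
    ∃ (w s : Fin n → Fin n → ℝ), (∀ i, UnitSum (w i)) ∧ CardinalNash p w s ∧
      Real.sqrt n ≤ SWopt w ∧ ∑ i, ∑ j, p s i j * w i j ≤ 3 := by
  classical
  haveI : NeZero k := ⟨by omega⟩
  have hkpos : 0 < k := by omega
  have hkR : (0:ℝ) < (k:ℝ) := by exact_mod_cast hkpos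
  have hn0 : 0 < n := by rw [hn]; exact pow_pos hkpos 2
  have hnR : (0:ℝ) < (n:ℝ) := by exact_mod_cast hn0
  have hkk : k * k = n := by rw [hn, sq]
  let E : Fin k × Fin k ≃ Fin n := finProdFinEquiv.trans (finCongr hkk)
  let spec : Fin n → Fin n := fun i => E ((E.symm i).1, (0 : Fin k))
  let u : Fin n → Fin n → ℝ := fun i j => if j = spec i then 1 else 0
  have hspec : ∀ t x : Fin k, spec (E (t, x)) = E (t, (0 : Fin k)) := by
    intro t x
    show E ((E.symm (E (t, x))).1, (0 : Fin k)) = E (t, (0 : Fin k))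
    rw [Equiv.symm_apply_apply]
  have hu_apply : ∀ i j, u i j = if j = spec i then 1 else 0 := fun _ _ => rfl
  have hsum_ind : ∀ (f : Fin n → ℝ) (i : Fin n), ∑ j, f j * u i j = f (spec i) := by
    intro f i
    simp only [hu_apply, mul_ite, mul_one, mul_zero]
    rw [Finset.sum_ite_eq' Finset.univ (spec i) f, if_pos (Finset.mem_univ _)]
  have hu : ∀ i, UnitSum (u i) := by
    intro i
    constructor
    · intro j; rw [hu_apply]; split <;> norm_num
    · have := hsum_ind (fun _ => (1:ℝ)) i
      simpa using this
  obtain ⟨s, hs⟩ := hex u hu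
  obtain ⟨hpos, hrow, hcol⟩ := hmatch s hs.1
  -- in each block, pick an agent getting her block's special item with prob ≤ 1/k
  have hch : ∀ t : Fin k, ∃ x : Fin k, p s (E (t, x)) (E (t, (0:Fin k))) ≤ 1 / k := by
    intro t
    by_contra hcon
    push_neg at hcon
    have hinj : Function.Injective (fun x : Fin k => E (t, x)) := by
      intro a b hab
      have h := E.injective hab
      exact (Prod.ext_iff.1 h).2
    have himg : ∑ i ∈ Finset.univ.image (fun x : Fin k => E (t, x)), p s i (E (t, (0:Fin k)))
        = ∑ x : Fin k, p s (E (t, x)) (E (t, (0:Fin k))) :=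
      Finset.sum_image (fun a _ b _ h => hinj h)
    have h2 : ∑ x : Fin k, p s (E (t, x)) (E (t, (0:Fin k)))
        ≤ ∑ i : Fin n, p s i (E (t, (0:Fin k))) := by
      rw [← himg]
      exact Finset.sum_le_sum_of_subset_of_nonneg (Finset.subset_univ _)
        (fun i _ _ => hpos i _)
    have h1 : ∑ _x : Fin k, (1 / (k:ℝ)) < ∑ x : Fin k, p s (E (t, x)) (E (t, (0:Fin k))) :=
      Finset.sum_lt_sum_of_nonempty Finset.univ_nonempty (fun x _ => hcon x)
    have h3 : ∑ _x : Fin k, (1 / (k:ℝ)) = 1 := by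
      rw [Finset.sum_const, Finset.card_univ, Fintype.card_fin, nsmul_eq_mul]
      field_simp
    have h4 := lt_of_lt_of_le h1 h2
    rw [h3, hcol] at h4
    exact lt_irrefl _ h4
  choose r hr using hch
  let c : Fin k → Fin n := fun t => E (t, r t)
  have hcinj : Function.Injective c := by
    intro a b hab
    have h := E.injective hab
    exact (Prod.ext_iff.1 h).1
  let w : Fin n → Fin n → ℝ :=
    fun i => if (E.symm i).2 = r (E.symm i).1 then u i else fun _ => (n:ℝ)⁻¹
  have hw_apply : ∀ i, w i =
      if (E.symm i).2 = r (E.symm i).1 then u i else fun _ => (n:ℝ)⁻¹ := fun _ => rfl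
  have hwc : ∀ t, w (c t) = u (c t) := by
    intro t
    rw [hw_apply, if_pos]
    show (E.symm (E (t, r t))).2 = r (E.symm (E (t, r t))).1
    rw [Equiv.symm_apply_apply]
  have hlover : ∀ i, (E.symm i).2 = r (E.symm i).1 → i = c (E.symm i).1 := by
    intro i hl
    show i = E ((E.symm i).1, r (E.symm i).1)
    rw [← hl]
    exact (E.apply_symm_apply i).symm
  have hwnonneg : ∀ i j, 0 ≤ w i j := by
    intro i j
    rw [hw_apply]
    split
    · rw [hu_apply]; split <;> norm_num
    · positivity
  have hwu : ∀ i, UnitSum (w i) := by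
    intro i
    refine ⟨hwnonneg i, ?_⟩
    rw [hw_apply]
    split
    · exact (hu i).2
    · rw [Finset.sum_const, Finset.card_univ, Fintype.card_fin, nsmul_eq_mul]
      field_simp
  refine ⟨w, s, hwu, ⟨hs.1, ?_⟩, ?_, ?_⟩
  · -- Nash at w
    intro i s' hs'
    by_cases hl : (E.symm i).2 = r (E.symm i).1
    · rw [hw_apply, if_pos hl]
      exact hs.2 i s' hs'
    · rw [hw_apply, if_neg hl]
      have hupd : ∀ i', UnitSum (Function.update s i s' i') := by
        intro i'
        by_cases h : i' = i
        · subst h; rw [Function.update_self]; exact hs'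
        · rw [Function.update_of_ne h]; exact hs.1 i'
      obtain ⟨_, hrow', _⟩ := hmatch _ hupd
      have e1 : ∑ j, p (Function.update s i s') i j * (n:ℝ)⁻¹ = (n:ℝ)⁻¹ := by
        rw [← Finset.sum_mul, hrow' i, one_mul]
      have e2 : ∑ j, p s i j * (n:ℝ)⁻¹ = (n:ℝ)⁻¹ := by
        rw [← Finset.sum_mul, hrow i, one_mul]
      rw [e1, e2]
  · -- SWopt ≥ √n
    have hsqrt : Real.sqrt n = (k:ℝ) := by
      rw [hn]
      push_cast
      exact Real.sqrt_sq (by positivity)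
    rw [hsqrt]
    set μ : Equiv.Perm (Fin n) :=
      E.symm.trans ((Equiv.prodCongrRight fun t => Equiv.swap (r t) (0:Fin k)).trans E) with hμ
    have hμc : ∀ t, μ (c t) = E (t, (0:Fin k)) := by
      intro t
      show E ((Equiv.prodCongrRight fun t => Equiv.swap (r t) (0:Fin k))
        (E.symm (E (t, r t)))) = E (t, (0:Fin k))
      rw [Equiv.symm_apply_apply, Equiv.prodCongrRight_apply, Equiv.swap_apply_left]
    have key : ∀ t, w (c t) (μ (c t)) = 1 := by
      intro t
      rw [hwc, hμc, hu_apply, if_pos]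
      rw [hspec]
    have h1 : (k:ℝ) ≤ ∑ i, w i (μ i) := by
      have hsub : ∑ i ∈ Finset.univ.image c, w i (μ i) ≤ ∑ i, w i (μ i) :=
        Finset.sum_le_sum_of_subset_of_nonneg (Finset.subset_univ _)
          (fun i _ _ => hwnonneg i _)
      have him : ∑ i ∈ Finset.univ.image c, w i (μ i) = (k:ℝ) := by
        rw [Finset.sum_image (fun a _ b _ h => hcinj h)]
        rw [Finset.sum_congr rfl (fun t _ => key t)]
        simp
      linarith
    calc (k:ℝ) ≤ ∑ i, w i (μ i) := h1
      _ ≤ SWopt w := by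
        unfold SWopt
        exact Finset.le_sup' (fun ν : Equiv.Perm (Fin n) => ∑ i, w i (ν i)) (Finset.mem_univ μ)
  · -- welfare at most 3
    have key : ∀ i, ∑ j, p s i j * w i j ≤
        (if (E.symm i).2 = r (E.symm i).1 then (1:ℝ)/k else 0) + (n:ℝ)⁻¹ := by
      intro i
      by_cases hl : (E.symm i).2 = r (E.symm i).1
      · rw [if_pos hl]
        have hic := hlover i hl
        have : ∑ j, p s i j * w i j = p s i (spec i) := by
          rw [hw_apply, if_pos hl]
          exact hsum_ind (p s i) i
        rw [this]
        have : p s i (spec i) ≤ 1 / k := by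
          rw [hic, hspec (E.symm i).1 (r (E.symm i).1)]
          exact hr _
        have hninv : (0:ℝ) ≤ (n:ℝ)⁻¹ := by positivity
        linarith
      · rw [if_neg hl]
        have : ∑ j, p s i j * w i j = (n:ℝ)⁻¹ := by
          rw [hw_apply, if_neg hl, ← Finset.sum_mul, hrow i, one_mul]
        rw [this]
        norm_num
    have hsum : ∑ i, ∑ j, p s i j * w i j ≤
        ∑ i : Fin n, ((if (E.symm i).2 = r (E.symm i).1 then (1:ℝ)/k else 0) + (n:ℝ)⁻¹) :=
      Finset.sum_le_sum (fun i _ => key i)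
    have hcount : ∑ i : Fin n, (if (E.symm i).2 = r (E.symm i).1 then (1:ℝ)/k else 0) ≤ 1 := by
      have hiff : ∀ i : Fin n, (if (E.symm i).2 = r (E.symm i).1 then (1:ℝ)/k else 0) =
          (if i ∈ Finset.univ.image c then (1:ℝ)/k else 0) := by
        intro i
        by_cases hl : (E.symm i).2 = r (E.symm i).1
        · rw [if_pos hl, if_pos]
          exact Finset.mem_image.2 ⟨(E.symm i).1, Finset.mem_univ _, (hlover i hl).symm⟩
        · rw [if_neg hl, if_neg]
          intro hmem
          obtain ⟨t, _, hti⟩ := Finset.mem_image.1 hmem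
          apply hl
          rw [← hti]
          show (E.symm (E (t, r t))).2 = r (E.symm (E (t, r t))).1
          rw [Equiv.symm_apply_apply]
      rw [Finset.sum_congr rfl (fun i _ => hiff i), Finset.sum_ite_mem, Finset.univ_inter,
        Finset.sum_const, Finset.card_image_of_injective _ hcinj, Finset.card_univ,
        Fintype.card_fin, nsmul_eq_mul]
      rw [mul_one_div, div_self (ne_of_gt hkR)]
    have htot : ∑ i : Fin n, ((if (E.symm i).2 = r (E.symm i).1 then (1:ℝ)/k else 0) + (n:ℝ)⁻¹)
        ≤ 2 := by
      rw [Finset.sum_add_distrib, Finset.sum_const, Finset.card_univ, Fintype.card_fin,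
        nsmul_eq_mul, mul_inv_cancel₀ (ne_of_gt hnR)]
      linarith
    linarith
end

section
/- Let n ≥ 4 and let M be any deterministic mechanism mapping reported profiles of unit-sum valuations to matchings, and suppose M admits at least one pure Nash equilibrium at every true profile of unit-sum valuations. Then there exist a unit-sum valuation profile w and a pure Nash equilibrium s of M at w such that SW_OPT(w) ≥ n − 2 and SW_M(w,s) ≤ 2/n. In particular, the pure Price of Anarchy of every such deterministic mechanism is at least n(n−2)/2 = Ω(n²). -/
/-- `s` is a pure Nash equilibrium of the deterministic mechanism `M` at true
valuation profile `u`: every report is a unit-sum valuation and no agent can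
strictly increase her utility by unilaterally changing her report to another
unit-sum valuation. -/
def DetNash {n : ℕ} (M : (Fin n → Fin n → ℝ) → Equiv.Perm (Fin n))
    (u s : Fin n → Fin n → ℝ) : Prop :=
  (∀ i, UnitSum (s i)) ∧
    ∀ (i : Fin n) (s' : Fin n → ℝ), UnitSum s' →
      u i (M (Function.update s i s') i) ≤ u i (M s i)


/-- strictly decreasing unit-sum valuation -/
noncomputable def cval (n : ℕ) (j : Fin n) : ℝ := 2 * ((n : ℝ) - j.val) / (n * (n + 1))

lemma cval_lt {n : ℕ} {a b : Fin n} (h : a.val < b.val) : cval n b < cval n a := by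
  have hn : (0 : ℝ) < n := by exact_mod_cast b.pos
  unfold cval
  have hD : (0:ℝ) < (n:ℝ) * (n+1) := by positivity
  rw [div_lt_div_iff_of_pos_right hD]
  have : (a.val : ℝ) < b.val := by exact_mod_cast h
  linarith

lemma cval_unitSum {n : ℕ} (hn : 1 ≤ n) : UnitSum (cval n) := by
  have hn0 : (0:ℝ) < n := by exact_mod_cast hn
  constructor
  · intro j
    have : (j.val : ℝ) < n := by exact_mod_cast j.is_lt
    unfold cval
    have : (0:ℝ) ≤ (n:ℝ) - j.val := by linarith
    positivity
  · have hsum : ∑ j : Fin n, (j.val : ℝ) = n * (n - 1) / 2 := by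
      have h2 : ((∑ i ∈ Finset.range n, i : ℕ) : ℝ) * 2 = (n : ℝ) * ((n:ℝ) - 1) := by
        rw [← Nat.cast_ofNat, ← Nat.cast_mul, Finset.sum_range_id_mul_two]
        push_cast [Nat.cast_sub hn]
        ring
      have h3 : ∑ j : Fin n, (j.val : ℝ) = ((∑ i ∈ Finset.range n, i : ℕ) : ℝ) := by
        rw [Nat.cast_sum]
        exact Fin.sum_univ_eq_sum_range _ n
      rw [h3]; linarith
    unfold cval
    rw [← Finset.sum_div, ← Finset.mul_sum, Finset.sum_sub_distrib, hsum,
      Finset.sum_const, Finset.card_univ, Fintype.card_fin]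
    field_simp
    ring

lemma sum_ite_pivot {n : ℕ} (a : Fin n) (A B : ℝ) :
    ∑ t : Fin n, (if t = a then A else B) = A + ((n:ℝ) - 1) * B := by
  rw [← Finset.add_sum_erase _ _ (Finset.mem_univ a), if_pos rfl]
  have h1 : ∑ t ∈ Finset.univ.erase a, (if t = a then A else B)
      = ∑ t ∈ Finset.univ.erase a, B :=
    Finset.sum_congr rfl (fun t ht => if_neg (Finset.ne_of_mem_erase ht))
  have hn : 1 ≤ n := a.pos
  rw [h1, Finset.sum_const, Finset.card_erase_of_mem (Finset.mem_univ a),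
    Finset.card_univ, Fintype.card_fin, nsmul_eq_mul, Nat.cast_sub hn, Nat.cast_one]

/-- The valuation assigned to the agent who receives item `j` in equilibrium:
uniform if `j = 0`, otherwise concentrated on item `j - 1`. -/
noncomputable def Wfun (n : ℕ) [NeZero n] (j : Fin n) : Fin n → ℝ :=
  if j = 0 then (fun _ => 1 / (n : ℝ))
  else fun t => if t = j - 1 then 1 - 1 / (n : ℝ) else 1 / ((n : ℝ) * ((n : ℝ) - 1))

/-- Lower bound for deterministic mechanisms: for `n ≥ 4`, any deterministic
mechanism `M` (mapping unit-sum report profiles to matchings) that admits a pure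
Nash equilibrium at every unit-sum profile has a unit-sum profile `w` and a pure
Nash equilibrium `s` at `w` with `SW_OPT(w) ≥ n - 2` and `SW_M(w, s) ≤ 2/n`;
hence its pure Price of Anarchy is `Ω(n²)`. -/
theorem deterministic_pure_poa_lower (n : ℕ) (hn : 4 ≤ n)
    (M : (Fin n → Fin n → ℝ) → Equiv.Perm (Fin n))
    (hex : ∀ u : Fin n → Fin n → ℝ, (∀ i, UnitSum (u i)) → ∃ s, DetNash M u s) :
    ∃ (w s : Fin n → Fin n → ℝ), (∀ i, UnitSum (w i)) ∧ DetNash M w s ∧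
      (n : ℝ) - 2 ≤ SWopt w ∧ ∑ i, w i (M s i) ≤ 2 / (n : ℝ) := by
  obtain ⟨m, rfl⟩ : ∃ m, n = m + 1 := ⟨n - 1, by omega⟩
  have hm : 3 ≤ m := by omega
  have hmR : (3:ℝ) ≤ (m:ℝ) := by exact_mod_cast hm
  have hcast : ((m + 1 : ℕ) : ℝ) = (m : ℝ) + 1 := by push_cast; ring
  have hnR0 : (0:ℝ) < ((m + 1 : ℕ) : ℝ) := by rw [hcast]; linarith
  have hnR1 : (0:ℝ) < ((m + 1 : ℕ) : ℝ) - 1 := by rw [hcast]; linarith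
  obtain ⟨s, hsu, hsnash⟩ := hex (fun _ => cval (m+1)) (fun _ => cval_unitSum (by omega))
  set μ := M s with hμ
  have key : ∀ (i : Fin (m+1)) (s' : Fin (m+1) → ℝ), UnitSum s' →
      (μ i).val ≤ (M (Function.update s i s') i).val := by
    intro i s' h
    by_contra hlt
    push_neg at hlt
    have h1 := hsnash i s' h
    simp only at h1
    have h2 := cval_lt hlt
    linarith
  have h10 : (1 : Fin (m+1)) ≠ 0 := by
    rw [Fin.ne_iff_vne, Fin.val_one', Fin.val_zero]
    simp [Nat.mod_eq_of_lt (show 1 < m + 1 by omega)]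
  have hsubne : ∀ j : Fin (m+1), j ≠ j - 1 := fun j h => h10 (sub_eq_self.mp h.symm)
  have hWdiag : ∀ j : Fin (m+1), Wfun (m+1) j j
      = if j = 0 then 1 / ((m+1 : ℕ) : ℝ) else 1 / (((m+1 : ℕ) : ℝ) * (((m+1 : ℕ) : ℝ) - 1)) := by
    intro j
    unfold Wfun
    split_ifs with h
    · rfl
    · exact if_neg (hsubne j)
  have hWpred : ∀ j : Fin (m+1), Wfun (m+1) j (j - 1)
      = if j = 0 then 1 / ((m+1 : ℕ) : ℝ) else 1 - 1 / ((m+1 : ℕ) : ℝ) := by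
    intro j
    unfold Wfun
    split_ifs with h
    · rfl
    · exact if_pos rfl
  refine ⟨fun i => Wfun (m+1) (μ i), s, ?_, ⟨hsu, ?_⟩, ?_, ?_⟩
  · -- each Wfun is unit-sum
    intro i
    show UnitSum (Wfun (m+1) (μ i))
    unfold Wfun
    split_ifs with h
    · constructor
      · intro t; positivity
      · rw [Finset.sum_const, Finset.card_univ, Fintype.card_fin, nsmul_eq_mul]
        field_simp
    · constructor
      · intro t
        dsimp only
        split_ifs with ht
        · have : 1 / ((m+1 : ℕ) : ℝ) ≤ 1 := by
            rw [div_le_one hnR0]; linarith [hcast]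
          linarith
        · exact le_of_lt (div_pos one_pos (mul_pos hnR0 hnR1))
      · rw [sum_ite_pivot (μ i - 1) (1 - 1 / ((m+1 : ℕ) : ℝ))
            (1 / (((m+1 : ℕ) : ℝ) * (((m+1 : ℕ) : ℝ) - 1)))]
        field_simp
        ring
  · -- Nash equilibrium at w
    intro i s' h
    rw [← hμ]
    by_cases h0 : μ i = 0
    · simp [Wfun, h0]
    · have hval0 : (μ i).val ≠ 0 := fun hv => h0 (Fin.ext hv)
      have hne1 : M (Function.update s i s') i ≠ μ i - 1 := by
        intro hEq
        have h1 := Fin.coe_sub_one (μ i)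
        rw [if_neg h0] at h1
        have h2 := key i s' h
        rw [hEq, h1] at h2
        omega
      simp only [Wfun, if_neg h0]
      rw [if_neg hne1, if_neg (hsubne (μ i))]
  · -- optimal social welfare is large
    unfold SWopt
    refine le_trans ?_ (Finset.le_sup' _ (Finset.mem_univ (μ.trans (Equiv.subRight 1))))
    simp only [Equiv.trans_apply, Equiv.subRight_apply]
    have hre : ∑ i, Wfun (m+1) (μ i) (μ i - 1) = ∑ j, Wfun (m+1) j (j - 1) :=
      Equiv.sum_comp μ (fun j => Wfun (m+1) j (j - 1))
    rw [hre, Finset.sum_congr rfl (fun j _ => hWpred j), sum_ite_pivot, hcast]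
    have hpos : (0:ℝ) < (m:ℝ) + 1 := by linarith
    have heq : 1 / ((m:ℝ) + 1) + ((m:ℝ) + 1 - 1) * (1 - 1 / ((m:ℝ) + 1))
        = ((m:ℝ) + 1) - 2 + 2 / ((m:ℝ) + 1) := by
      field_simp
      ring
    have h2 : (0:ℝ) ≤ 2 / ((m:ℝ) + 1) := by positivity
    linarith
  · -- equilibrium social welfare is small
    rw [← hμ]
    have hre : ∑ i, Wfun (m+1) (μ i) (μ i) = ∑ j, Wfun (m+1) j j :=
      Equiv.sum_comp μ (fun j => Wfun (m+1) j j)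
    rw [hre, Finset.sum_congr rfl (fun j _ => hWdiag j), sum_ite_pivot, hcast]
    have hpos : (0:ℝ) < (m:ℝ) + 1 := by linarith
    have hd1 : ((m:ℝ) + 1) - 1 ≠ 0 := by intro h; rw [sub_eq_zero] at h; linarith
    have heq : 1 / ((m:ℝ) + 1) + ((m:ℝ) + 1 - 1) * (1 / (((m:ℝ) + 1) * (((m:ℝ) + 1) - 1)))
        = 2 / ((m:ℝ) + 1) := by
      field_simp
      ring
    linarith
end
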